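/- arXiv:2502.11674 — 4 statements merged into one kernel-verified Lean document; each statement's English description precedes it below -/
import Mathlib

section
/- If a graph G admits a tree-layout of bandwidth at most k, then G admits a completion (supergraph on the same vertex set) H that is proper chordal with clique number ω(H) ≤ k+1. -/
open SimpleGraph

/-- `x` is a (reflexive) ancestor of `y` in the tree `T` rooted at `r`,
expressed metrically: `x` lies on the unique `r`–`y` path. -/
def AncIn {V : Type*} (T : SimpleGraph V) (r x y : V) : Prop :=
  T.dist r x + T.dist x y = T.dist r y

/-- A tree-layout of `G`: a rooted tree on the vertex set of `G` such that the endpoints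
of every edge of `G` are in ancestor-descendant relation. -/
structure TreeLayout {V : Type*} (G : SimpleGraph V) where
  tree : SimpleGraph V
  isTree : tree.IsTree
  root : V
  layout : ∀ ⦃x y : V⦄, G.Adj x y → AncIn tree root x y ∨ AncIn tree root y x

namespace TreeLayout

variable {V : Type*} {G : SimpleGraph V}

/-- `x` is an ancestor of `y` (reflexively) in the tree-layout. -/
def Anc (L : TreeLayout G) (x y : V) : Prop := AncIn L.tree L.root x y

def StrictAnc (L : TreeLayout G) (x y : V) : Prop := L.Anc x y ∧ x ≠ y

/-- The bandwidth of the tree-layout is at most `k`: neighbours in `G` are at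
tree-distance at most `k`. -/
def BandwidthLE (L : TreeLayout G) (k : ℕ) : Prop :=
  ∀ ⦃x y : V⦄, G.Adj x y → L.tree.dist x y ≤ k

/-- The interval `[a,b]` of the tree-layout: vertices on the tree path from `a` to `b`
(for `a` an ancestor of `b`). -/
def interval (L : TreeLayout G) (a b : V) : Set V := {z : V | L.Anc a z ∧ L.Anc z b}

end TreeLayout

/-- Treebandwidth: the minimum bandwidth over tree-layouts of `G`. -/
noncomputable def treebandwidth {V : Type*} (G : SimpleGraph V) : ℕ :=
  sInf {k | ∃ L : TreeLayout G, L.BandwidthLE k}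

/-- Treedepth: the minimum depth (number of vertices on a root-to-leaf path) of a
tree-layout (elimination tree) of `G`. -/
noncomputable def treedepth {V : Type*} (G : SimpleGraph V) : ℕ :=
  sInf {k | ∃ L : TreeLayout G, ∀ v : V, L.tree.dist L.root v + 1 ≤ k}

/-- A tree-partition of `G`: a partition of `V(G)` indexed by the nodes of a tree such that
every edge of `G` has both ends in one part or in parts indexed by adjacent nodes. -/
structure TreePartition {V : Type*} (G : SimpleGraph V) where
  ι : Type
  tree : SimpleGraph ι
  isTree : tree.IsTree
  part : V → ι
  adj : ∀ ⦃x y : V⦄, G.Adj x y → part x = part y ∨ tree.Adj (part x) (part y)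

/-- Tree-partition-width: minimum over tree-partitions of the maximum part size. -/
noncomputable def treePartitionWidth {V : Type*} (G : SimpleGraph V) : ℕ :=
  sInf {k | ∃ P : TreePartition G, ∀ i : P.ι, {v : V | P.part v = i}.ncard ≤ k}

/-- The connected component of `v` in the subgraph of `G` induced by `S`. -/
def connCompIn {V : Type*} (G : SimpleGraph V) (S : Set V) (v : V) : Set V :=
  {w : V | ∃ (hv : v ∈ S) (hw : w ∈ S), (G.induce S).Reachable ⟨v, hv⟩ ⟨w, hw⟩}

/-- `RootedTreedepthLE G U S n` expresses `td(G[S], U) ≤ n` for the rooted treedepth: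
it is `0` when `S` misses `U`, and otherwise one may delete one vertex from each
connected component and recurse. -/
inductive RootedTreedepthLE {V : Type*} (G : SimpleGraph V) (U : Set V) : Set V → ℕ → Prop
  | base (S : Set V) (n : ℕ) (h : S ∩ U = ∅) : RootedTreedepthLE G U S n
  | step (S : Set V) (n : ℕ) (pick : ∀ v : V, v ∈ S → V)
      (hpick : ∀ (v : V) (hv : v ∈ S), pick v hv ∈ connCompIn G S v)
      (h : ∀ (v : V) (hv : v ∈ S),
        RootedTreedepthLE G U (connCompIn G S v \ {pick v hv}) n) :
      RootedTreedepthLE G U S (n + 1)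

/-- A `U`-rooted minor model of the path on `k` vertices in `G`. -/
structure RootedPathMinor {V : Type*} (G : SimpleGraph V) (U : Set V) (k : ℕ) where
  branch : Fin k → Set V
  connected : ∀ i, (G.induce (branch i)).Connected
  disjoint : ∀ i j, i ≠ j → Disjoint (branch i) (branch j)
  rooted : ∀ i, (branch i ∩ U).Nonempty
  adj : ∀ i j : Fin k, (j : ℕ) = (i : ℕ) + 1 → ∃ a ∈ branch i, ∃ b ∈ branch j, G.Adj a b

/-- A subdivision of the `k`-fan in `G` with universal (center) vertex `v`:
branch vertices `b 0, …, b (k-1)` of the path, internally disjoint spokes from `v`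
and internally disjoint path segments between consecutive branch vertices. -/
structure FanSubdivision {V : Type*} (G : SimpleGraph V) (v : V) (k : ℕ) where
  b : Fin k → V
  binj : Function.Injective b
  bne : ∀ i, b i ≠ v
  spoke : ∀ i : Fin k, G.Walk v (b i)
  spokePath : ∀ i, (spoke i).IsPath
  seg : ∀ (i : Fin k) (h : (i : ℕ) + 1 < k), G.Walk (b i) (b ⟨(i : ℕ) + 1, h⟩)
  segPath : ∀ i h, (seg i h).IsPath
  vNotinSeg : ∀ i h, v ∉ (seg i h).support
  spokeDisj : ∀ i j, i ≠ j →
    {x | x ∈ (spoke i).support} ∩ {x | x ∈ (spoke j).support} = {v}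
  spokeSegDisj : ∀ i j h,
    {x | x ∈ (spoke i).support} ∩ {x | x ∈ (seg j h).support} ⊆
      ({b i} : Set V) ∩ {b j, b ⟨(j : ℕ) + 1, h⟩}
  segDisj : ∀ i j hi hj, i ≠ j →
    {x | x ∈ (seg i hi).support} ∩ {x | x ∈ (seg j hj).support} ⊆
      ({b i, b ⟨(i : ℕ) + 1, hi⟩} : Set V) ∩ {b j, b ⟨(j : ℕ) + 1, hj⟩}

/-- A `p`-centered colouring: every (nonempty) connected induced subgraph either receives
more than `p` colours or has a uniquely coloured vertex. -/
def IsPCenteredColoring {V : Type*} (G : SimpleGraph V) (p : ℕ) (c : V → ℕ) : Prop :=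
  ∀ S : Set V, S.Nonempty → (G.induce S).Connected →
    p < (c '' S).ncard ∨ ∃ x ∈ S, ∀ y ∈ S, c y = c x → y = x

/-- Treewidth, characterised via tree-layouts: the minimum over tree-layouts of the maximum
over nodes `u` of the number of strict ancestors of `u` that are `G`-neighbours of some
descendant of `u` (including `u`). -/
noncomputable def treewidthTL {V : Type*} (G : SimpleGraph V) : ℕ :=
  sInf {k | ∃ L : TreeLayout G, ∀ u : V,
    {a : V | L.StrictAnc a u ∧ ∃ d : V, L.Anc u d ∧ G.Adj a d}.ncard ≤ k}

/-- The pruned subtree of `x` in a tree-layout: descendants of `x` (including `x`) having a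
neighbour of `x` among their own descendants. -/
def prunedSubtree {V : Type*} {G : SimpleGraph V} (L : TreeLayout G) (x : V) : Set V :=
  {y : V | L.Anc x y ∧ ∃ d : V, L.Anc y d ∧ G.Adj x d}

/-- Treespan: the minimum over tree-layouts of (maximum size of a pruned subtree minus one). -/
noncomputable def treespan {V : Type*} (G : SimpleGraph V) : ℕ :=
  sInf {k | ∃ L : TreeLayout G, ∀ x : V, (prunedSubtree L x).ncard ≤ k + 1}

/-- A tree decomposition of `G`. -/
structure TreeDecomp {V : Type*} (G : SimpleGraph V) where
  ι : Type
  tree : SimpleGraph ι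
  isTree : tree.IsTree
  bag : ι → Set V
  coverV : ∀ v : V, ∃ t, v ∈ bag t
  coverE : ∀ ⦃x y : V⦄, G.Adj x y → ∃ t, x ∈ bag t ∧ y ∈ bag t
  subtree : ∀ v : V, (tree.induce {t : ι | v ∈ bag t}).Connected

/-- Domino treewidth: minimum width over tree decompositions in which every vertex
belongs to at most two bags. -/
noncomputable def dominoTreewidth {V : Type*} (G : SimpleGraph V) : ℕ :=
  sInf {k | ∃ D : TreeDecomp G, (∀ v : V, {t : D.ι | v ∈ D.bag t}.ncard ≤ 2) ∧
    ∀ t : D.ι, (D.bag t).ncard ≤ k + 1}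

/-- Edge-treewidth via tree-layouts: the minimum over tree-layouts of the maximum over nodes
`u` of the number of edges with one endpoint a descendant of `u` (including `u`) and the other
a strict ancestor of `u`. -/
noncomputable def edgeTreewidth {V : Type*} (G : SimpleGraph V) : ℕ :=
  sInf {k | ∃ L : TreeLayout G, ∀ u : V,
    {p : V × V | L.StrictAnc p.1 u ∧ L.Anc u p.2 ∧ G.Adj p.1 p.2}.ncard ≤ k}

/-- `S` is a block (2-connected component) of `G`: a maximal connected set of vertices whose
induced subgraph has no cutvertex. -/
def IsBlock {V : Type*} (G : SimpleGraph V) (S : Set V) : Prop :=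
  S.Nonempty ∧ (G.induce S).Connected ∧
    (∀ x ∈ S, (G.induce (S \ {x})).Preconnected) ∧
    ∀ S' : Set V, S ⊆ S' → (G.induce S').Connected →
      (∀ x ∈ S', (G.induce (S' \ {x})).Preconnected) → S' = S

/-- Biconnected maximum degree: the maximum over blocks of `G` of the maximum degree
inside the block. -/
noncomputable def biconnMaxDegree {V : Type*} (G : SimpleGraph V) : ℕ :=
  sSup {d | ∃ (S : Set V) (v : V), IsBlock G S ∧ v ∈ S ∧ d = {w ∈ S | G.Adj v w}.ncard}

/-- `G` is 3-connected: more than 3 vertices, and removing any two vertices leaves it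
connected. -/
def ThreeConnected {V : Type*} (G : SimpleGraph V) : Prop :=
  3 < Nat.card V ∧ ∀ x y : V, (G.induce {v : V | v ≠ x ∧ v ≠ y}).Connected

/-- `G` has `H` as a minor (branch-set model). -/
def HasMinor {V W : Type*} (G : SimpleGraph V) (H : SimpleGraph W) : Prop :=
  ∃ B : W → Set V, (∀ w, (G.induce (B w)).Connected) ∧
    (∀ w w', w ≠ w' → Disjoint (B w) (B w')) ∧
    ∀ ⦃w w'⦄, H.Adj w w' → ∃ a ∈ B w, ∃ b ∈ B w', G.Adj a b

/-- Planarity via Wagner's theorem: no `K₅` minor and no `K₃,₃` minor. -/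
def PlanarWagner {V : Type*} (G : SimpleGraph V) : Prop :=
  ¬ HasMinor G (completeGraph (Fin 5)) ∧
    ¬ HasMinor G (completeBipartiteGraph (Fin 3) (Fin 3))

/-- A subdivision of the `k`-wheel in `G` with hub `v`. -/
structure WheelSubdivision {V : Type*} (G : SimpleGraph V) (v : V) (k : ℕ) where
  b : Fin k → V
  binj : Function.Injective b
  bne : ∀ i, b i ≠ v
  spoke : ∀ i : Fin k, G.Walk v (b i)
  spokePath : ∀ i, (spoke i).IsPath
  seg : ∀ i : Fin k, G.Walk (b i) (b (finRotate k i))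
  segPath : ∀ i, (seg i).IsPath
  vNotinSeg : ∀ i, v ∉ (seg i).support
  spokeDisj : ∀ i j, i ≠ j →
    {x | x ∈ (spoke i).support} ∩ {x | x ∈ (spoke j).support} = {v}
  spokeSegDisj : ∀ i j,
    {x | x ∈ (spoke i).support} ∩ {x | x ∈ (seg j).support} ⊆
      ({b i} : Set V) ∩ {b j, b (finRotate k j)}
  segDisj : ∀ i j, i ≠ j →
    {x | x ∈ (seg i).support} ∩ {x | x ∈ (seg j).support} ⊆
      ({b i, b (finRotate k i)} : Set V) ∩ {b j, b (finRotate k j)}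

/-- A subdivision of the `k`-dipole with poles `u`, `v`: `k` internally vertex-disjoint
`u`–`v` paths of length at least `2`. -/
structure DipoleSubdivision {V : Type*} (G : SimpleGraph V) (u v : V) (k : ℕ) where
  path : Fin k → G.Walk u v
  isPath : ∀ i, (path i).IsPath
  len : ∀ i, 2 ≤ (path i).length
  disj : ∀ i j, i ≠ j →
    {x | x ∈ (path i).support} ∩ {x | x ∈ (path j).support} = ({u, v} : Set V)

/-- A separation of `G`. -/
def IsSeparation {V : Type*} (G : SimpleGraph V) (A B : Set V) : Prop :=
  A ∪ B = Set.univ ∧ ∀ a ∈ A \ B, ∀ b ∈ B \ A, ¬ G.Adj a b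

/-- `μ(X,Y)`: the minimum order of a separation `(A,B)` with `X ⊆ A` and `Y ⊆ B`. -/
noncomputable def muSep {V : Type*} (G : SimpleGraph V) (X Y : Set V) : ℕ :=
  sInf {n | ∃ A B : Set V, IsSeparation G A B ∧ X ⊆ A ∧ Y ⊆ B ∧ (A ∩ B).ncard = n}

def IsMaximalClique {V : Type*} (G : SimpleGraph V) (K : Set V) : Prop :=
  G.IsClique K ∧ ∀ K' : Set V, G.IsClique K' → K ⊆ K' → K' = K

/-- `G` is proper chordal: it has a tree-layout in which every maximal clique is an
interval of a root-to-leaf path. -/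
def ProperChordal {V : Type*} (G : SimpleGraph V) : Prop :=
  ∃ L : TreeLayout G, ∀ K : Set V, IsMaximalClique G K →
    ∃ a b : V, L.Anc a b ∧ K = L.interval a b

/-- A topological-minor model (subdivision embedding) of `H` in `G`. -/
structure TopMinorEmbedding {W V : Type*} (H : SimpleGraph W) (G : SimpleGraph V) where
  φ : W → V
  inj : Function.Injective φ
  path : ∀ ⦃a b : W⦄, H.Adj a b → G.Walk (φ a) (φ b)
  isPath : ∀ ⦃a b : W⦄ (h : H.Adj a b), (path h).IsPath
  branchOnPath : ∀ ⦃a b : W⦄ (h : H.Adj a b) (w : W),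
    φ w ∈ (path h).support → w = a ∨ w = b
  disj : ∀ ⦃a b c d : W⦄ (hab : H.Adj a b) (hcd : H.Adj c d), s(a, b) ≠ s(c, d) →
    {x | x ∈ (path hab).support} ∩ {x | x ∈ (path hcd).support} ⊆
      ({φ a, φ b} : Set V) ∩ {φ c, φ d}

/-- A subdivision of the star `K_{1,s}` in `H` with all leaves in `X`. -/
structure StarSubdivision {V : Type*} (H : SimpleGraph V) (X : Set V) (s : ℕ) where
  center : V
  leaf : Fin s → V
  leafInj : Function.Injective leaf
  leafX : ∀ i, leaf i ∈ X
  leafNe : ∀ i, leaf i ≠ center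
  path : ∀ i : Fin s, H.Walk center (leaf i)
  isPath : ∀ i, (path i).IsPath
  disj : ∀ i j, i ≠ j →
    {x | x ∈ (path i).support} ∩ {x | x ∈ (path j).support} = {center}

/-- The weight `w(t,U)` of a set `U` at a node `t` of a tree decomposition is at most `a`:
`|β(t) ∩ U|` plus the number of a suitable family of adhesions incident to `t` whose union
hits all paths from `β(t)` to `U ∖ β(t)` is at most `a`. -/
def WeightLE {V : Type*} {G : SimpleGraph V} (D : TreeDecomp G) (U : Set V) (t : D.ι)
    (a : ℕ) : Prop :=
  ∃ F : Set D.ι, (∀ s ∈ F, D.tree.Adj t s) ∧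
    (D.bag t ∩ U).ncard + F.ncard ≤ a ∧
    ∀ ⦃x y : V⦄ (p : G.Walk x y), x ∈ D.bag t → y ∈ U \ D.bag t →
      ∃ z ∈ p.support, ∃ s ∈ F, z ∈ D.bag t ∩ D.bag s

/-- The graph obtained from `G` by subdividing the edge `xy` into a path with `n + 1`
new internal vertices. -/
def subdivideEdge {V : Type*} (G : SimpleGraph V) (x y : V) (n : ℕ) :
    SimpleGraph (V ⊕ Fin (n + 1)) :=
  SimpleGraph.fromRel (fun a b =>
    (∃ u w : V, a = Sum.inl u ∧ b = Sum.inl w ∧ G.Adj u w ∧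
      ¬(u = x ∧ w = y) ∧ ¬(u = y ∧ w = x)) ∨
    (a = Sum.inl x ∧ b = Sum.inr 0) ∨
    (∃ i : Fin n, a = Sum.inr i.castSucc ∧ b = Sum.inr i.succ) ∨
    (a = Sum.inr (Fin.last n) ∧ b = Sum.inl y))

/-! The completion joins every ancestor–descendant pair of the layout at tree-distance at most
`k`. A clique of it is a chain of the tree order, so it lies in the interval between its
shallowest and its deepest vertex; depths along a root-to-leaf path are distinct, so the clique
has at most `k + 1` vertices. Conversely, an interval of length at most `k` is a clique, hence
every maximal clique is such an interval. -/

namespace SimpleGraph.IsTree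

variable {V : Type*} {T : SimpleGraph V} {u v w : V}

lemma length_eq_dist_of_isPath (hT : T.IsTree) {p : T.Walk u v} (hp : p.IsPath) :
    p.length = T.dist u v := by
  obtain ⟨q, hq, hlen⟩ := hT.connected.exists_path_of_dist u v
  rw [(hT.existsUnique_path u v).unique hp hq, hlen]

lemma mem_support_iff_dist_add_dist (hT : T.IsTree) {p : T.Walk u v} (hp : p.IsPath) :
    w ∈ p.support ↔ T.dist u w + T.dist w v = T.dist u v := by
  classical
  constructor
  · intro hw
    rw [← hT.length_eq_dist_of_isPath hp, ← hT.length_eq_dist_of_isPath (hp.takeUntil hw),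
      ← hT.length_eq_dist_of_isPath (hp.dropUntil hw), ← Walk.length_append, Walk.take_spec]
  · intro h
    obtain ⟨p₁, -, hp₁⟩ := hT.connected.exists_path_of_dist u w
    obtain ⟨p₂, -, hp₂⟩ := hT.connected.exists_path_of_dist w v
    have hgeod : (p₁.append p₂).IsPath :=
      Walk.isPath_of_length_eq_dist _ (by rw [Walk.length_append, hp₁, hp₂, h])
    rw [(hT.existsUnique_path u v).unique hp hgeod, Walk.mem_support_append_iff]
    exact Or.inl p₁.end_mem_support

end SimpleGraph.IsTree

section AncIn

variable {V : Type*} {T : SimpleGraph V} {r x y z : V}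

lemma ancIn_refl (T : SimpleGraph V) (r x : V) : AncIn T r x x := by
  simp [AncIn]

lemma AncIn.antisymm (hT : T.Connected) (hxy : AncIn T r x y) (hyx : AncIn T r y x) :
    x = y := by
  unfold AncIn at hxy hyx
  exact hT.dist_eq_zero_iff.mp (by omega)

lemma AncIn.trans (hT : T.Connected) (hxy : AncIn T r x y) (hyz : AncIn T r y z) :
    AncIn T r x z := by
  unfold AncIn at *
  have := hT.dist_triangle (u := r) (v := x) (w := z)
  have := hT.dist_triangle (u := x) (v := y) (w := z)
  omega

lemma ancIn_of_dist_root_le (hT : T.Connected) (hxy : AncIn T r x y ∨ AncIn T r y x)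
    (hd : T.dist r x ≤ T.dist r y) : AncIn T r x y := by
  rcases hxy with hxy | hyx
  · exact hxy
  · obtain rfl : y = x := hT.dist_eq_zero_iff.mp (by unfold AncIn at hyx; omega)
    exact hyx

lemma SimpleGraph.IsTree.ancIn_total (hT : T.IsTree) (hx : AncIn T r x z) (hy : AncIn T r y z) :
    AncIn T r x y ∨ AncIn T r y x := by
  classical
  obtain ⟨p, hp, -⟩ := hT.connected.exists_path_of_dist r z
  have hxp := (hT.mem_support_iff_dist_add_dist hp).mpr hx
  have hyp := (hT.mem_support_iff_dist_add_dist hp).mpr hy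
  rw [← p.take_spec hxp, Walk.mem_support_append_iff] at hyp
  rcases hyp with hyr | hyz
  · exact Or.inr ((hT.mem_support_iff_dist_add_dist (hp.takeUntil hxp)).mp hyr)
  · have := (hT.mem_support_iff_dist_add_dist (hp.dropUntil hxp)).mp hyz
    unfold AncIn at *
    omega

end AncIn

namespace TreeLayout

variable {V : Type*} {G : SimpleGraph V} (L : TreeLayout G) (k : ℕ)

def bandCompletion : SimpleGraph V where
  Adj x y := x ≠ y ∧ (L.Anc x y ∨ L.Anc y x) ∧ L.tree.dist x y ≤ k
  symm := ⟨fun _ _ h => ⟨h.1.symm, h.2.1.symm, SimpleGraph.dist_comm (G := L.tree) ▸ h.2.2⟩⟩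
  loopless := ⟨fun _ h => h.1 rfl⟩

def bandCompletionLayout : TreeLayout (L.bandCompletion k) :=
  ⟨L.tree, L.isTree, L.root, fun _ _ h => h.2.1⟩

variable {L k}

lemma le_bandCompletion (hL : L.BandwidthLE k) : G ≤ L.bandCompletion k :=
  fun _ _ h => ⟨h.ne, L.layout h, hL h⟩

lemma anc_total_of_mem_interval {a b z w : V} (hz : z ∈ L.interval a b)
    (hw : w ∈ L.interval a b) : L.Anc z w ∨ L.Anc w z :=
  L.isTree.ancIn_total hz.2 hw.2

lemma exists_subset_interval_of_isChain {K : Set V} (hK : IsChain L.Anc K) (hfin : K.Finite)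
    (hne : K.Nonempty) : ∃ a ∈ K, ∃ b ∈ K, K ⊆ L.interval a b := by
  have hc := L.isTree.connected
  obtain ⟨a, ha, hmin⟩ := K.exists_min_image (L.tree.dist L.root) hfin hne
  obtain ⟨b, hb, hmax⟩ := K.exists_max_image (L.tree.dist L.root) hfin hne
  have hcomp : ∀ x ∈ K, ∀ y ∈ K, L.Anc x y ∨ L.Anc y x := fun x hx y hy =>
    (eq_or_ne x y).elim (fun h => Or.inl (h ▸ ancIn_refl _ _ _)) (hK hx hy)
  exact ⟨a, ha, b, hb, fun z hz => ⟨ancIn_of_dist_root_le hc (hcomp a ha z hz) (hmin z hz),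
    ancIn_of_dist_root_le hc (hcomp z hz b hb) (hmax z hz)⟩⟩

lemma card_le_of_subset_interval {a b : V} (hab : L.Anc a b) {s : Finset V}
    (hs : ↑s ⊆ L.interval a b) : s.card ≤ L.tree.dist a b + 1 := by
  have hc := L.isTree.connected
  have hinj : Set.InjOn (L.tree.dist L.root) s := fun z hz w hw hzw =>
    (ancIn_of_dist_root_le hc (anc_total_of_mem_interval (hs hz) (hs hw)) hzw.le).antisymm hc
      (ancIn_of_dist_root_le hc (anc_total_of_mem_interval (hs hw) (hs hz)) hzw.ge)
  have hmaps : ∀ z ∈ s, L.tree.dist L.root z ∈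
      Finset.Icc (L.tree.dist L.root a) (L.tree.dist L.root b) := fun z hz => by
    have ⟨haz, hzb⟩ := hs hz
    unfold Anc AncIn at haz hzb
    simp only [Finset.mem_Icc]
    omega
  have := Finset.card_le_card_of_injOn _ hmaps hinj
  unfold Anc AncIn at hab
  simp only [Nat.card_Icc] at this
  omega

lemma isChain_of_isClique {K : Set V} (hK : (L.bandCompletion k).IsClique K) :
    IsChain L.Anc K :=
  hK.mono' fun _ _ h => h.2.1

lemma exists_subset_interval_of_isClique {K : Set V} (hK : (L.bandCompletion k).IsClique K)
    (hfin : K.Finite) (hne : K.Nonempty) :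
    ∃ a b, L.Anc a b ∧ L.tree.dist a b ≤ k ∧ K ⊆ L.interval a b := by
  obtain ⟨a, ha, b, hb, hK'⟩ := exists_subset_interval_of_isChain (isChain_of_isClique hK) hfin hne
  refine ⟨a, b, (hK' hb).1, ?_, hK'⟩
  rcases eq_or_ne a b with rfl | hab
  · simp
  · exact (hK ha hb hab).2.2

lemma card_le_of_isClique {s : Finset V} (hs : (L.bandCompletion k).IsClique (s : Set V)) :
    s.card ≤ k + 1 := by
  rcases s.eq_empty_or_nonempty with rfl | hne
  · simp
  obtain ⟨a, b, hab, hdist, hsub⟩ :=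
    exists_subset_interval_of_isClique hs s.finite_toSet (Finset.coe_nonempty.mpr hne)
  exact (card_le_of_subset_interval hab hsub).trans (by omega)

lemma dist_le_of_mem_interval {a b z w : V} (hz : z ∈ L.interval a b)
    (hw : w ∈ L.interval a b) : L.tree.dist z w ≤ L.tree.dist a b := by
  have hab : L.Anc a b := hz.1.trans L.isTree.connected hz.2
  have := SimpleGraph.dist_comm (G := L.tree) (u := z) (v := w)
  rcases anc_total_of_mem_interval hz hw with hzw | hwz <;>
  · obtain ⟨haz, hzb⟩ := hz
    obtain ⟨haw, hwb⟩ := hw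
    unfold Anc AncIn at *
    omega

lemma isClique_interval {a b : V} (hab : L.tree.dist a b ≤ k) :
    (L.bandCompletion k).IsClique (L.interval a b) := fun _ hz _ hw hzw =>
  ⟨hzw, anc_total_of_mem_interval hz hw, (dist_le_of_mem_interval hz hw).trans hab⟩

lemma finite_of_isClique {K : Set V} (hK : (L.bandCompletion k).IsClique K) : K.Finite := by
  by_contra hinf
  obtain ⟨t, htK, htcard⟩ := Set.Infinite.exists_subset_card_eq hinf (k + 2)
  have := card_le_of_isClique (hK.subset htK)
  omega

lemma exists_eq_interval_of_isMaximalClique {K : Set V}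
    (hK : IsMaximalClique (L.bandCompletion k) K) : ∃ a b, L.Anc a b ∧ K = L.interval a b := by
  have hne : K.Nonempty := by
    by_contra hemp
    rw [Set.not_nonempty_iff_eq_empty] at hemp
    subst hemp
    exact Set.singleton_ne_empty L.root
      (hK.2 {L.root} (Set.pairwise_singleton _ _) (Set.empty_subset _))
  obtain ⟨a, b, hab, hdist, hsub⟩ :=
    exists_subset_interval_of_isClique hK.1 (finite_of_isClique hK.1) hne
  exact ⟨a, b, hab, (hK.2 _ (isClique_interval hdist) hsub).symm⟩

end TreeLayout

/-- a tree-layout of bandwidth at most `k` yields a proper chordal completion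
with clique number at most `k + 1`. -/
theorem properChordal_completion_of_layout {V : Type*} (G : SimpleGraph V) (k : ℕ)
    (h : ∃ L : TreeLayout G, L.BandwidthLE k) :
    ∃ H : SimpleGraph V, G ≤ H ∧ ProperChordal H ∧
      ∀ s : Finset V, H.IsClique (s : Set V) → s.card ≤ k + 1 := by
  obtain ⟨L, hL⟩ := h
  exact ⟨L.bandCompletion k, TreeLayout.le_bandCompletion hL,
    ⟨L.bandCompletionLayout k, fun _ hK => TreeLayout.exists_eq_interval_of_isMaximalClique hK⟩,
    fun _ hs => TreeLayout.card_le_of_isClique hs⟩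
end

section
/- For every connected graph there exists a function f such that: if H is a connected graph and X ⊆ V(H) with |X| ≥ f(s), then either H contains a subdivision of the star K_{1,s} with all s leaves in X, or H contains an X-rooted path minor on s branch sets. -/
open SimpleGraph

/-!
Work in a finite connected set `S` with a root `v ∈ S`, and look at the components of
`S \ {v}`. If `s` of them meet `X`, paths from `v` into them form a subdivided star. Otherwise
some component `C` holds at least `|X ∩ S| / (s + 1)` vertices of `X`, and we recurse into `C` from
a neighbour of `v`. If `v ∈ X`, or another component meets `X`, then `v` together with that
component is a first branch set and `C` has to supply one branch set fewer; if not, `X ∩ S ⊆ C`,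
so `C` has to supply equally many and `v` joins the first of them. As `S` shrinks in each step,
the invariant `(s + 1) ^ j ≤ |X ∩ S|` for `j + 1` missing branch sets carries the induction.
-/

section Components

variable {V : Type*} {G : SimpleGraph V} {T : Set V} {y z : V}

lemma connCompIn_subset : connCompIn G T y ⊆ T := fun _ h => h.2.1

lemma mem_connCompIn_self (hy : y ∈ T) : y ∈ connCompIn G T y := ⟨hy, hy, .refl _⟩

lemma connCompIn_eq_of_mem (hz : z ∈ connCompIn G T y) :
    connCompIn G T z = connCompIn G T y := by
  obtain ⟨hy, hz, hyz⟩ := hz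
  ext x
  exact ⟨fun ⟨_, hx, hzx⟩ => ⟨hy, hx, hyz.trans hzx⟩,
    fun ⟨_, hx, hyx⟩ => ⟨hz, hx, hyz.symm.trans hyx⟩⟩

lemma disjoint_connCompIn (h : connCompIn G T y ≠ connCompIn G T z) :
    Disjoint (connCompIn G T y) (connCompIn G T z) :=
  Set.disjoint_left.2 fun _ hy hz =>
    h ((connCompIn_eq_of_mem hy).symm.trans (connCompIn_eq_of_mem hz))

lemma mem_connCompIn_of_adj {a b : V} (ha : a ∈ connCompIn G T y) (hb : b ∈ T)
    (hab : G.Adj a b) : b ∈ connCompIn G T y :=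
  let ⟨hy, haT, hya⟩ := ha
  ⟨hy, hb, hya.trans (induce_adj.2 hab : (G.induce T).Adj ⟨a, haT⟩ ⟨b, hb⟩).reachable⟩

lemma SimpleGraph.Walk.support_subset_connCompIn :
    ∀ {a b : V} (p : G.Walk a b), a ∈ connCompIn G T y → (∀ x ∈ p.support, x ∈ T) →
      ∀ x ∈ p.support, x ∈ connCompIn G T y
  | _, _, .nil, ha, _, x, hx => by rwa [List.mem_singleton.1 hx]
  | _, _, .cons hab p, ha, hT, x, hx => by
    rw [support_cons, List.mem_cons] at hx
    obtain rfl | hx := hx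
    · exact ha
    · exact p.support_subset_connCompIn (mem_connCompIn_of_adj ha (hT _ (by simp)) hab)
        (fun u hu => hT u (by simp [hu])) x hx

lemma SimpleGraph.Walk.mem_of_mem_support_map_induce {S : Set V} {a b : S}
    (p : (G.induce S).Walk a b) :
    ∀ x ∈ (p.map (Embedding.induce S).toHom).support, x ∈ S := by
  intro x hx
  rw [support_map, List.mem_map] at hx
  obtain ⟨u, -, rfl⟩ := hx
  exact u.2

lemma connected_induce_connCompIn (hy : y ∈ T) : (G.induce (connCompIn G T y)).Connected := by
  refine G.induce_connected_of_patches y (mem_connCompIn_self hy) fun {z} hz => ?_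
  obtain ⟨_, _, ⟨p⟩⟩ := hz
  let q := p.map (Embedding.induce T).toHom
  exact ⟨{x | x ∈ q.support},
    q.support_subset_connCompIn (mem_connCompIn_self hy) p.mem_of_mem_support_map_induce,
    q.start_mem_support, q.end_mem_support, q.connected_induce_support.preconnected _ _⟩

lemma exists_adj_of_mem_connCompIn {S : Set V} {v : V} (hS : (G.induce S).Connected)
    (hv : v ∈ S) (hy : y ∈ S \ {v}) : ∃ w ∈ connCompIn G (S \ {v}) y, G.Adj v w := by
  obtain ⟨p⟩ := hS.preconnected ⟨y, hy.1⟩ ⟨v, hv⟩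
  let q := p.map (Embedding.induce S).toHom
  obtain ⟨d, hd, hd₁, hd₂⟩ := q.exists_boundary_dart (connCompIn G (S \ {v}) y)
    (mem_connCompIn_self hy) fun h => (connCompIn_subset h).2 rfl
  have hdv : d.snd = v := by
    by_contra hne
    exact hd₂ (mem_connCompIn_of_adj hd₁
      ⟨p.mem_of_mem_support_map_induce _ (q.dart_snd_mem_support_of_mem_darts hd), hne⟩ d.adj)
  exact ⟨d.fst, hd₁, hdv ▸ d.adj.symm⟩

lemma exists_isPath_of_connected_induce {C : Set V} (hC : (G.induce C).Connected) {a b : V}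
    (ha : a ∈ C) (hb : b ∈ C) : ∃ p : G.Walk a b, p.IsPath ∧ ∀ x ∈ p.support, x ∈ C := by
  obtain ⟨p, hp⟩ := (hC.preconnected ⟨a, ha⟩ ⟨b, hb⟩).exists_isPath
  exact ⟨_, hp.map (Embedding.induce (G := G) C).injective, p.mem_of_mem_support_map_induce⟩

lemma connected_induce_singleton (v : V) : (G.induce {v}).Connected :=
  ⟨Preconnected.of_subsingleton⟩

end Components

section Star

variable {V : Type*} {G : SimpleGraph V} {X : Set V} {s : ℕ} {v : V}

lemma StarSubdivision.nonempty_of_pairwise_disjoint (C : Fin s → Set V)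
    (hdisj : Pairwise fun i j => Disjoint (C i) (C j)) (hv : ∀ i, v ∉ C i)
    (hconn : ∀ i, (G.induce (C i)).Connected) (hX : ∀ i, (C i ∩ X).Nonempty)
    (hadj : ∀ i, ∃ w ∈ C i, G.Adj v w) : Nonempty (StarSubdivision G X s) := by
  choose x hxC hxX using hX
  choose w hwC hvw using hadj
  choose q hq hqC using fun i => exists_isPath_of_connected_induce (hconn i) (hwC i) (hxC i)
  have hsupp : ∀ i, ∀ u ∈ (Walk.cons (hvw i) (q i)).support, u = v ∨ u ∈ C i := by
    intro i u hu
    rw [Walk.support_cons, List.mem_cons] at hu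
    exact hu.imp_right (hqC i u)
  refine ⟨⟨v, x, fun i j hij => ?_, hxX, fun i h => hv i (h ▸ hxC i),
    fun i => .cons (hvw i) (q i), fun i => ?_, fun i j hij => ?_⟩⟩
  · by_contra hne
    exact Set.disjoint_left.1 (hdisj hne) (hxC i) (hij ▸ hxC j)
  · exact (Walk.cons_isPath_iff _ _).2 ⟨hq i, fun h => hv i (hqC i v h)⟩
  · refine Set.eq_singleton_iff_unique_mem.2 ⟨⟨Walk.start_mem_support _,
      Walk.start_mem_support _⟩, fun u ⟨hui, huj⟩ => ?_⟩
    obtain hu | hui := hsupp i u hui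
    · exact hu
    obtain hu | huj := hsupp j u huj
    · exact hu
    · exact absurd huj (Set.disjoint_left.1 (hdisj hij) hui)

lemma StarSubdivision.nonempty_of_finset (𝒞 : Finset (Set V)) (hs : s ≤ 𝒞.card)
    (hdisj : (𝒞 : Set (Set V)).PairwiseDisjoint id) (hv : ∀ C ∈ 𝒞, v ∉ C)
    (hconn : ∀ C ∈ 𝒞, (G.induce C).Connected) (hX : ∀ C ∈ 𝒞, (C ∩ X).Nonempty)
    (hadj : ∀ C ∈ 𝒞, ∃ w ∈ C, G.Adj v w) : Nonempty (StarSubdivision G X s) := by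
  let e : Fin s ↪ 𝒞 := (Fin.castLEEmb hs).trans 𝒞.equivFin.symm.toEmbedding
  refine StarSubdivision.nonempty_of_pairwise_disjoint (fun i => (e i : Set V))
    (fun i j hij => hdisj (e i).2 (e j).2 fun h => hij (e.injective (Subtype.ext h)))
    (fun i => hv _ (e i).2) (fun i => hconn _ (e i).2) (fun i => hX _ (e i).2)
    (fun i => hadj _ (e i).2)

end Star

namespace RootedPathMinor

variable {V : Type*} {G : SimpleGraph V} {U : Set V} {k : ℕ}

def empty : RootedPathMinor G U 0 :=
  ⟨Fin.elim0, fun i => i.elim0, fun i => i.elim0, fun i => i.elim0, fun i => i.elim0⟩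

def cons (m : RootedPathMinor G U k) (B : Set V) (hconn : (G.induce B).Connected)
    (hU : (B ∩ U).Nonempty) (hdisj : ∀ i, Disjoint B (m.branch i))
    (hadj : ∀ h : 0 < k, ∃ a ∈ B, ∃ b ∈ m.branch ⟨0, h⟩, G.Adj a b) :
    RootedPathMinor G U (k + 1) where
  branch := Fin.cons B m.branch
  connected := Fin.cases hconn m.connected
  disjoint i j hij := by
    cases i using Fin.cases <;> cases j using Fin.cases
    · exact absurd rfl hij
    · exact hdisj _
    · exact (hdisj _).symm
    · exact m.disjoint _ _ fun h => hij (congrArg Fin.succ h)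
  rooted := Fin.cases hU m.rooted
  adj i j hij := by
    cases j using Fin.cases with
    | zero => simp at hij
    | succ j =>
      cases i using Fin.cases with
      | zero =>
        have hj : j = ⟨0, j.pos⟩ := Fin.ext (by simpa using hij)
        simp only [Fin.cons_zero, Fin.cons_succ]
        rw [hj]
        exact hadj j.pos
      | succ i => exact m.adj i j (by simpa using hij)

def tail (m : RootedPathMinor G U (k + 1)) : RootedPathMinor G U k where
  branch i := m.branch i.succ
  connected i := m.connected _
  disjoint i j hij := m.disjoint _ _ fun h => hij (Fin.succ_injective _ h)
  rooted i := m.rooted _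
  adj i j hij := m.adj _ _ (by simpa using hij)

end RootedPathMinor

section PathMinorAt

variable {V : Type*} {G : SimpleGraph V} {X S C B : Set V} {v w : V} {k : ℕ}

-- A minor of the path on `k + 1` vertices, so that `k = 0` is a single branch set.
def HasRootedPathMinorAt (G : SimpleGraph V) (X S : Set V) (v : V) (k : ℕ) : Prop :=
  ∃ m : RootedPathMinor G X (k + 1), (∀ i, m.branch i ⊆ S) ∧ v ∈ m.branch 0

lemma hasRootedPathMinorAt_zero (hS : (G.induce S).Connected) (hv : v ∈ S)
    (hX : (S ∩ X).Nonempty) : HasRootedPathMinorAt G X S v 0 :=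
  ⟨RootedPathMinor.empty.cons S hS hX (fun i => i.elim0) fun h => absurd h (lt_irrefl 0),
    fun i => by rw [Fin.fin_one_eq_zero i]; rfl, hv⟩

namespace HasRootedPathMinorAt

lemma cons (h : HasRootedPathMinorAt G X C w k) (hB : (G.induce B).Connected) (hvB : v ∈ B)
    (hBX : (B ∩ X).Nonempty) (hBC : Disjoint B C) (hBS : B ⊆ S) (hCS : C ⊆ S)
    (hvw : G.Adj v w) : HasRootedPathMinorAt G X S v (k + 1) := by
  obtain ⟨m, hmC, hwm⟩ := h
  refine ⟨m.cons B hB hBX (fun i => hBC.mono_right (hmC i)) fun _ => ⟨v, hvB, w, hwm, hvw⟩,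
    fun i => ?_, hvB⟩
  cases i using Fin.cases
  · exact hBS
  · exact (hmC _).trans hCS

lemma of_adj (h : HasRootedPathMinorAt G X C w k) (hvC : v ∉ C) (hv : v ∈ S) (hCS : C ⊆ S)
    (hvw : G.Adj v w) : HasRootedPathMinorAt G X S v k := by
  obtain ⟨m, hmC, hwm⟩ := h
  have hconn : (G.induce (insert v (m.branch 0))).Connected := by
    rw [← Set.singleton_union]
    exact connected_induce_union (connected_induce_singleton v).preconnected
      (m.connected 0).preconnected rfl hwm hvw
  refine ⟨m.tail.cons (insert v (m.branch 0)) hconn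
    ((m.rooted 0).mono (Set.inter_subset_inter_left _ (Set.subset_insert _ _)))
    (fun i => Set.disjoint_insert_left.2
      ⟨fun h => hvC (hmC _ h), m.disjoint _ _ (Fin.succ_ne_zero i).symm⟩)
    (fun h => ?_), fun i => ?_, Set.mem_insert _ _⟩
  · obtain ⟨a, ha, b, hb, hab⟩ := m.adj 0 (⟨0, h⟩ : Fin k).succ rfl
    exact ⟨a, Set.mem_insert_of_mem _ ha, b, hb, hab⟩
  · cases i using Fin.cases
    · exact Set.insert_subset hv ((hmC 0).trans hCS)
    · exact (hmC _).trans hCS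

end HasRootedPathMinorAt

end PathMinorAt

section Main

variable {V : Type*} {G : SimpleGraph V} {X S : Set V} {v : V} {s j : ℕ}

lemma star_or_exists_large_connCompIn (hfin : S.Finite) (hS : (G.induce S).Connected)
    (hv : v ∈ S) (hX : (s + 1) ^ (j + 1) ≤ (X ∩ S).ncard) :
    Nonempty (StarSubdivision G X s) ∨
      ∃ y ∈ S \ {v}, (s + 1) ^ j ≤ (X ∩ connCompIn G (S \ {v}) y).ncard := by
  classical
  have hYfin : (X ∩ (S \ {v})).Finite := hfin.subset fun _ hx => hx.2.1
  set Y := hYfin.toFinset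
  set 𝒞 := Y.image (connCompIn G (S \ {v}))
  have hY : s * (s + 1) ^ j ≤ Y.card := by
    have hpos : 0 < (s + 1) ^ j := by positivity
    have hpow : (s + 1) ^ (j + 1) = s * (s + 1) ^ j + (s + 1) ^ j := by ring
    have hdiff := Set.pred_ncard_le_ncard_sdiff_singleton (X ∩ S) v
    rw [Set.inter_sdiff_assoc, Set.ncard_eq_toFinset_card _ hYfin] at hdiff
    change _ ≤ Y.card at hdiff
    omega
  have hmem : ∀ C ∈ 𝒞, ∃ y ∈ X ∩ (S \ {v}), connCompIn G (S \ {v}) y = C := fun C hC => by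
    simpa [𝒞, Y] using hC
  by_cases hs : s ≤ 𝒞.card
  · left
    refine StarSubdivision.nonempty_of_finset (v := v) 𝒞 hs ?_ ?_ ?_ ?_ ?_ <;>
      try (intro C hC; obtain ⟨y, hy, rfl⟩ := hmem C hC)
    · intro C' hC' hne
      obtain ⟨y', -, rfl⟩ := hmem C' hC'
      exact disjoint_connCompIn hne
    · exact fun h => (connCompIn_subset h).2 rfl
    · exact connected_induce_connCompIn hy.2
    · exact ⟨y, mem_connCompIn_self hy.2, hy.1⟩
    · exact exists_adj_of_mem_connCompIn hS hv hy.2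
  · right
    have h𝒞 : 𝒞.Nonempty := by
      refine Finset.Nonempty.image (Finset.card_pos.1 ?_) _
      nlinarith [Nat.one_le_pow j (s + 1) (Nat.succ_pos s)]
    obtain ⟨C, hC, hCcard⟩ := Finset.exists_le_card_fiber_of_mul_le_card_of_maps_to
      (fun y hy => Finset.mem_image_of_mem _ hy) h𝒞
      ((Nat.mul_le_mul_right _ (not_le.1 hs).le).trans hY)
    obtain ⟨y, hy, rfl⟩ := hmem C hC
    refine ⟨y, hy.2, hCcard.trans ?_⟩
    rw [← Set.ncard_coe_finset]
    refine Set.ncard_le_ncard (fun z hz => ?_)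
      (hYfin.subset fun _ hz => ⟨hz.1, connCompIn_subset hz.2⟩)
    simp only [Finset.coe_filter, Set.Finite.mem_toFinset, Set.mem_ofPred_eq, Y] at hz
    exact ⟨hz.1.1, hz.2 ▸ mem_connCompIn_self hz.1.2⟩

lemma exists_head_or_subset_connCompIn (hS : (G.induce S).Connected) (hv : v ∈ S) (y : V) :
    (∃ B ⊆ S, v ∈ B ∧ Disjoint B (connCompIn G (S \ {v}) y) ∧ (G.induce B).Connected ∧
      (B ∩ X).Nonempty) ∨ X ∩ S ⊆ connCompIn G (S \ {v}) y := by
  have hvC : v ∉ connCompIn G (S \ {v}) y := fun h => (connCompIn_subset h).2 rfl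
  by_cases hvX : v ∈ X
  · exact Or.inl ⟨{v}, Set.singleton_subset_iff.2 hv, rfl, Set.disjoint_singleton_left.2 hvC,
      connected_induce_singleton v, ⟨v, rfl, hvX⟩⟩
  refine or_iff_not_imp_right.2 fun hXC => ?_
  obtain ⟨z, ⟨hzX, hzS⟩, hzC⟩ := Set.not_subset.1 hXC
  have hz : z ∈ S \ {v} := ⟨hzS, fun h => hvX (h ▸ hzX)⟩
  obtain ⟨w, hw, hvw⟩ := exists_adj_of_mem_connCompIn hS hv hz
  refine ⟨{v} ∪ connCompIn G (S \ {v}) z, Set.union_subset (Set.singleton_subset_iff.2 hv)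
    fun _ h => (connCompIn_subset h).1, Or.inl rfl, ?_, ?_,
    ⟨z, Or.inr (mem_connCompIn_self hz), hzX⟩⟩
  · refine Set.disjoint_union_left.2 ⟨Set.disjoint_singleton_left.2 hvC, disjoint_connCompIn ?_⟩
    exact fun h => hzC (h ▸ mem_connCompIn_self hz)
  · exact connected_induce_union (connected_induce_singleton v).preconnected
      (connected_induce_connCompIn hz).preconnected rfl hw hvw

theorem star_or_hasRootedPathMinorAt (hfin : S.Finite) (hS : (G.induce S).Connected)
    (hv : v ∈ S) (hX : (s + 1) ^ j ≤ (X ∩ S).ncard) :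
    Nonempty (StarSubdivision G X s) ∨ HasRootedPathMinorAt G X S v j := by
  induction hn : S.ncard using Nat.strong_induction_on generalizing j S v with
  | _ n ih =>
  obtain _ | j := j
  · refine Or.inr (hasRootedPathMinorAt_zero hS hv ?_)
    rw [Set.inter_comm]
    exact Set.nonempty_of_ncard_ne_zero (by simp at hX; omega)
  obtain hstar | ⟨y, hy, hyX⟩ := star_or_exists_large_connCompIn hfin hS hv hX
  · exact Or.inl hstar
  set C := connCompIn G (S \ {v}) y
  have hCS : C ⊆ S := fun _ h => (connCompIn_subset h).1
  have hvC : v ∉ C := fun h => (connCompIn_subset h).2 rfl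
  have hlt : C.ncard < n :=
    hn ▸ Set.ncard_lt_ncard (hCS.ssubset_of_not_subset fun h => hvC (h hv)) hfin
  obtain ⟨w, hwC, hvw⟩ := exists_adj_of_mem_connCompIn hS hv hy
  have hC := connected_induce_connCompIn (G := G) hy
  rcases exists_head_or_subset_connCompIn (X := X) hS hv y with
    ⟨B, hBS, hvB, hBC, hB, hBX⟩ | hXC
  · exact (ih _ hlt (hfin.subset hCS) hC hwC hyX rfl).imp_right
      fun h => h.cons hB hvB hBX hBC hBS hCS hvw
  · have hXC' : (s + 1) ^ (j + 1) ≤ (X ∩ C).ncard :=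
      hX.trans (Set.ncard_le_ncard (fun x hx => ⟨hx.1, hXC hx⟩)
        ((hfin.subset hCS).inter_of_right _))
    exact (ih _ hlt (hfin.subset hCS) hC hwC hXC' rfl).imp_right fun h => h.of_adj hvC hv hCS hvw

end Main

/-- rooted Ramsey-type lemma: a large enough rooted set in a connected graph
yields a subdivided star with leaves in `X` or an `X`-rooted path minor. -/
theorem star_or_rooted_path :
    ∃ f : ℕ → ℕ, ∀ (W : Type) (H : SimpleGraph W) (X : Set W) (s : ℕ),
      H.Connected → f s ≤ X.ncard →
      Nonempty (StarSubdivision H X s) ∨ Nonempty (RootedPathMinor H X s) := by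
  refine ⟨fun s => (s + 1) ^ s, fun W H X s hH hX => ?_⟩
  obtain _ | j := s
  · exact Or.inr ⟨RootedPathMinor.empty⟩
  have hXpos : 0 < X.ncard := (Nat.pow_pos (Nat.succ_pos _)).trans_le hX
  have hXfin : X.Finite := Set.finite_of_ncard_pos hXpos
  obtain ⟨v, hvX⟩ := Set.nonempty_of_ncard_ne_zero hXpos.ne'
  obtain ⟨S, hXS, hS⟩ :=
    H.extend_finset_to_connected hH.preconnected (t := hXfin.toFinset) ⟨v, by simpa⟩
  have hXS' : X ⊆ S := by simpa using hXS
  have hjX : (j + 1 + 1) ^ j ≤ (X ∩ S).ncard := by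
    rw [Set.inter_eq_left.2 hXS']
    exact (Nat.pow_le_pow_right (Nat.succ_pos _) (Nat.le_succ j)).trans hX
  exact (star_or_hasRootedPathMinorAt S.finite_toSet hS (hXS' hvX) hjX).imp_right
    fun ⟨m, _⟩ => ⟨m⟩
end

section
/- For every graph G, the maximum degree over 2-connected components of G is bounded if and only if G excludes both large subdivided fans and large subdivided dipoles: concretely, if some 2-connected component C of G has a vertex v of degree at least f(s) in C (for a suitable function f), then G contains a subdivision of the s-fan or a subdivision of the s-dipole. -/
/-!
The neighbours of `v` in the block lie in the connected graph `C - v`; take a breadth-first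
spanning tree of it. In a rooted tree, a set `X` of more than `s ^ s` vertices has either `s`
members below one vertex in pairwise different branches (a star), or a vertex `x` with `s`
ancestors each of which lies in `X` or has a member of `X` below it off the path to `x` (a comb).
Indeed, counting the members of `X` below a vertex by induction on the height, a vertex that lies
in `X` or has two branches costs one tooth, and each vertex has fewer than `s` branches.
Joining `v` to `X` turns a star into a dipole with poles `v` and the centre, and a comb into a
fan centred at `v` whose path is the spine.
-/

open SimpleGraph

structure RootedSpanningTree {V : Type*} (H : SimpleGraph V) where
  root : V
  parent : V → V
  depth : V → ℕ
  depth_root : depth root = 0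
  adj_parent : ∀ u, u ≠ root → H.Adj (parent u) u
  depth_parent : ∀ u, u ≠ root → depth (parent u) + 1 = depth u

namespace RootedSpanningTree

variable {V : Type*} {H : SimpleGraph V} (T : RootedSpanningTree H) {u w x : V}

lemma ne_root_of_depth_pos (h : 0 < T.depth u) : u ≠ T.root := by
  rintro rfl
  simp [T.depth_root] at h

lemma depth_iterate_parent {n : ℕ} (h : n ≤ T.depth x) :
    T.depth (T.parent^[n] x) = T.depth x - n := by
  induction n generalizing x with
  | zero => rfl
  | succ n ih =>
    have := T.depth_parent x (T.ne_root_of_depth_pos (by omega))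
    rw [Function.iterate_succ_apply, ih (by omega)]
    omega

lemma iterate_parent_depth (x : V) : T.parent^[T.depth x] x = T.root := by
  generalize hn : T.depth x = n
  induction n generalizing x with
  | zero =>
    by_contra hx
    have := T.depth_parent x hx
    omega
  | succ n ih =>
    have := T.depth_parent x (T.ne_root_of_depth_pos (by omega))
    rw [Function.iterate_succ_apply]
    exact ih _ (by omega)

/-- The ancestor of `x` at depth `k`; for `k > T.depth x` the truncated subtraction makes it
`x` itself. -/
def ancAt (x : V) (k : ℕ) : V := T.parent^[T.depth x - k] x

/-- `u` is an ancestor of `x` or `x` itself. -/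
def Anc (u x : V) : Prop := T.depth u ≤ T.depth x ∧ T.ancAt x (T.depth u) = u

def interval (u x : V) : Set V := {a | T.Anc u a ∧ T.Anc a x}

lemma depth_ancAt {k : ℕ} (h : k ≤ T.depth x) : T.depth (T.ancAt x k) = k := by
  rw [ancAt, T.depth_iterate_parent (Nat.sub_le _ _)]
  omega

@[simp]
lemma ancAt_depth (x : V) : T.ancAt x (T.depth x) = x := by
  simp [ancAt]

lemma ancAt_ancAt {j k : ℕ} (hjk : j ≤ k) (hk : k ≤ T.depth x) :
    T.ancAt (T.ancAt x k) j = T.ancAt x j := by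
  rw [ancAt, T.depth_ancAt hk, ancAt, ancAt, ← Function.iterate_add_apply]
  congr 1
  omega

lemma anc_ancAt {k : ℕ} (h : k ≤ T.depth x) : T.Anc (T.ancAt x k) x := by
  refine ⟨?_, ?_⟩ <;> rw [T.depth_ancAt h]
  exact h

lemma anc_refl (x : V) : T.Anc x x := ⟨le_rfl, T.ancAt_depth x⟩

lemma anc_root (x : V) : T.Anc T.root x := by
  refine ⟨by simp [T.depth_root], ?_⟩
  rw [T.depth_root, ancAt, Nat.sub_zero, T.iterate_parent_depth]

variable {T}

lemma Anc.depth_le (h : T.Anc u x) : T.depth u ≤ T.depth x := h.1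

lemma Anc.trans (huw : T.Anc u w) (hwx : T.Anc w x) : T.Anc u x := by
  refine ⟨huw.1.trans hwx.1, ?_⟩
  rw [← T.ancAt_ancAt huw.1 hwx.1, hwx.2, huw.2]

lemma Anc.of_depth_le (hux : T.Anc u x) (hwx : T.Anc w x) (h : T.depth u ≤ T.depth w) :
    T.Anc u w := by
  refine ⟨h, ?_⟩
  rw [← hwx.2, T.ancAt_ancAt h hwx.1, hux.2]

lemma Anc.eq_of_depth_eq (hux : T.Anc u x) (hwx : T.Anc w x) (h : T.depth u = T.depth w) :
    u = w := by
  rw [← hux.2, ← hwx.2, h]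

lemma Anc.depth_lt (h : T.Anc u x) (hne : u ≠ x) : T.depth u < T.depth x :=
  h.depth_le.lt_of_ne fun hd => hne (h.eq_of_depth_eq (T.anc_refl x) hd)

variable (T)

def child (u x : V) : V := T.ancAt x (T.depth u + 1)

lemma depth_child (h : T.Anc u x) (hne : u ≠ x) : T.depth (T.child u x) = T.depth u + 1 :=
  T.depth_ancAt (h.depth_lt hne)

lemma anc_child_right (h : T.Anc u x) (hne : u ≠ x) : T.Anc (T.child u x) x :=
  T.anc_ancAt (h.depth_lt hne)

lemma anc_child_left (h : T.Anc u x) (hne : u ≠ x) : T.Anc u (T.child u x) :=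
  h.of_depth_le (T.anc_child_right h hne) (by rw [T.depth_child h hne]; omega)

lemma child_eq_of_anc {c : V} (hc : T.depth c = T.depth u + 1) (h : T.Anc c x) :
    T.child u x = c := by
  rw [child, ← hc]
  exact h.2

variable {T}

lemma Anc.child_eq (huw : T.Anc u w) (hne : u ≠ w) (hwx : T.Anc w x) :
    T.child u x = T.child u w := by
  rw [child, child, ← hwx.2, T.ancAt_ancAt (huw.depth_lt hne) hwx.1]

variable (T)

lemma depth_parent_of_succ_le {n : ℕ} (h : n + 1 ≤ T.depth x) : n ≤ T.depth (T.parent x) := by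
  have := T.depth_parent x (T.ne_root_of_depth_pos (by omega))
  omega

def walkUp : (n : ℕ) → (x : V) → n ≤ T.depth x → H.Walk x (T.parent^[n] x)
  | 0, _, _ => .nil
  | n + 1, x, h =>
    .cons (T.adj_parent x (T.ne_root_of_depth_pos (by omega))).symm
      (walkUp n (T.parent x) (T.depth_parent_of_succ_le h))

lemma length_walkUp (n : ℕ) (x : V) (h : n ≤ T.depth x) : (T.walkUp n x h).length = n := by
  induction n generalizing x with
  | zero => rfl
  | succ n ih => simp [walkUp, ih]

lemma support_walkUp_succ {n : ℕ} (h : n + 1 ≤ T.depth x) :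
    (T.walkUp (n + 1) x h).support =
      x :: (T.walkUp n (T.parent x) (T.depth_parent_of_succ_le h)).support :=
  rfl

lemma mem_support_walkUp {n : ℕ} {x z : V} {h : n ≤ T.depth x} :
    z ∈ (T.walkUp n x h).support ↔ ∃ i ≤ n, T.parent^[i] x = z := by
  induction n generalizing x with
  | zero => simp [walkUp, eq_comm]
  | succ n ih =>
    rw [T.support_walkUp_succ, List.mem_cons, ih]
    constructor
    · rintro (rfl | ⟨i, hi, rfl⟩)
      · exact ⟨0, by omega, rfl⟩
      · exact ⟨i + 1, by omega, rfl⟩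
    · rintro ⟨_ | i, hi, rfl⟩
      · exact .inl rfl
      · exact .inr ⟨i, by omega, rfl⟩

lemma isPath_walkUp (n : ℕ) (x : V) (h : n ≤ T.depth x) : (T.walkUp n x h).IsPath := by
  induction n generalizing x with
  | zero => exact .nil
  | succ n ih =>
    rw [Walk.isPath_def, T.support_walkUp_succ, List.nodup_cons, ← Walk.isPath_def]
    refine ⟨?_, ih _ _⟩
    rw [T.mem_support_walkUp]
    rintro ⟨i, hi, hx⟩
    have hpx := T.depth_parent x (T.ne_root_of_depth_pos (by omega))
    have := T.depth_iterate_parent (n := i) (x := T.parent x) (by omega)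
    rw [hx] at this
    omega

lemma Anc.iterate_parent_eq {T : RootedSpanningTree H} (h : T.Anc u x) :
    T.parent^[T.depth x - T.depth u] x = u :=
  h.2

def pathTo (h : T.Anc u x) : H.Walk x u :=
  (T.walkUp _ x (Nat.sub_le _ _)).copy rfl h.iterate_parent_eq

lemma length_pathTo (h : T.Anc u x) : (T.pathTo h).length = T.depth x - T.depth u := by
  rw [pathTo, Walk.length_copy, T.length_walkUp]

lemma isPath_pathTo (h : T.Anc u x) : (T.pathTo h).IsPath := by
  rw [pathTo, Walk.isPath_copy]
  exact T.isPath_walkUp _ _ _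

lemma setOf_mem_support_pathTo (h : T.Anc u x) :
    {a | a ∈ (T.pathTo h).support} = T.interval u x := by
  ext a
  simp only [pathTo, Walk.support_copy, T.mem_support_walkUp, Set.mem_ofPred_eq, interval]
  constructor
  · rintro ⟨i, hi, rfl⟩
    have hi' : T.depth x - i ≤ T.depth x := Nat.sub_le _ _
    have hanc : T.Anc (T.ancAt x (T.depth x - i)) x := T.anc_ancAt hi'
    rw [ancAt, Nat.sub_sub_self (by omega)] at hanc
    refine ⟨h.of_depth_le hanc ?_, hanc⟩
    have := h.depth_le
    rw [T.depth_iterate_parent (by omega)]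
    omega
  · rintro ⟨hua, hax⟩
    exact ⟨T.depth x - T.depth a, by have := hua.depth_le; omega, hax.2⟩

lemma setOf_mem_support_pathTo_reverse (h : T.Anc u x) :
    {a | a ∈ (T.pathTo h).reverse.support} = T.interval u x := by
  simp only [Walk.support_reverse, List.mem_reverse]
  exact T.setOf_mem_support_pathTo h

section StarComb

open Finset

variable (X : Finset V)

open Classical in
noncomputable def branches (u : V) : Finset V := {x ∈ X | T.Anc u x ∧ x ≠ u}.image (T.child u)

def IsTooth (x y : V) : Prop := ∃ z ∈ X, T.Anc y z ∧ (z = y ∨ T.child y z ≠ T.child y x)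

open Classical in
/-- The teeth of `x` below `u`, recorded by their depths. -/
noncomputable def toothDepths (u x : V) : Finset ℕ :=
  {k ∈ Icc (T.depth u) (T.depth x) | T.IsTooth X x (T.ancAt x k)}

structure Star (s : ℕ) where
  center : V
  leaf : Fin s → V
  leaf_mem : ∀ i, leaf i ∈ X
  anc_leaf : ∀ i, T.Anc center (leaf i)
  leaf_ne : ∀ i, leaf i ≠ center
  child_injective : Function.Injective fun i => T.child center (leaf i)

structure Comb (s : ℕ) where
  tip : V
  spine : Fin s → V
  anc_spine : ∀ i, T.Anc (spine i) tip
  strictMono_depth_spine : StrictMono (T.depth ∘ spine)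
  isTooth : ∀ i, T.IsTooth X tip (spine i)

variable {X}

lemma mem_toothDepths_of_isTooth (hux : T.Anc u x) (hu : T.IsTooth X x u) :
    T.depth u ∈ T.toothDepths X u x := by
  simp only [toothDepths, mem_filter, mem_Icc, hux.2]
  exact ⟨⟨le_rfl, hux.depth_le⟩, hu⟩

lemma depth_mem_toothDepths (hx : x ∈ X) (hux : T.Anc u x) :
    T.depth x ∈ T.toothDepths X u x := by
  simp only [toothDepths, mem_filter, mem_Icc, ancAt_depth]
  exact ⟨⟨hux.depth_le, le_rfl⟩, x, hx, T.anc_refl x, .inl rfl⟩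

lemma toothDepths_subset {c : V} (h : T.depth u ≤ T.depth c) :
    T.toothDepths X c x ⊆ T.toothDepths X u x := by
  intro k
  simp only [toothDepths, mem_filter, mem_Icc]
  exact fun ⟨⟨hck, hkx⟩, hk⟩ => ⟨⟨h.trans hck, hkx⟩, hk⟩

lemma mem_branches {c : V} :
    c ∈ T.branches X u ↔ ∃ x ∈ X, (T.Anc u x ∧ x ≠ u) ∧ T.child u x = c := by
  simp [branches, and_assoc]

lemma anc_and_depth_of_mem_branches {c : V} (hc : c ∈ T.branches X u) :
    T.Anc u c ∧ T.depth c = T.depth u + 1 := by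
  obtain ⟨x, -, ⟨hux, hxu⟩, rfl⟩ := T.mem_branches.1 hc
  exact ⟨T.anc_child_left hux hxu.symm, T.depth_child hux hxu.symm⟩

open Classical in
lemma card_filter_anc_le (u : V) :
    #{x ∈ X | T.Anc u x} ≤
      (if u ∈ X then 1 else 0) + ∑ c ∈ T.branches X u, #{x ∈ X | T.Anc c x} := by
  have hsub : {x ∈ X | T.Anc u x} ⊆
      {x ∈ X | x = u} ∪ (T.branches X u).biUnion fun c => {x ∈ X | T.Anc c x} := by
    intro x hx
    rw [mem_filter] at hx
    by_cases hxu : x = u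
    · exact mem_union_left _ (mem_filter.2 ⟨hx.1, hxu⟩)
    refine mem_union_right _ (mem_biUnion.2 ⟨T.child u x, ?_, ?_⟩)
    · exact T.mem_branches.2 ⟨x, hx.1, ⟨hx.2, hxu⟩, rfl⟩
    · exact mem_filter.2 ⟨hx.1, T.anc_child_right hx.2 (Ne.symm hxu)⟩
  refine (card_le_card hsub).trans ((card_union_le _ _).trans (Nat.add_le_add ?_ card_biUnion_le))
  split_ifs with hu
  · exact card_le_one.2 fun a ha b hb => by rw [(mem_filter.1 ha).2, (mem_filter.1 hb).2]
  · exact (card_eq_zero.2 (filter_eq_empty_iff.2 fun x hx (hxu : x = u) => hu (hxu ▸ hx))).le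

lemma isTooth_of_branching (hu : u ∈ X ∨ 1 < #(T.branches X u)) {c : V}
    (hc : c ∈ T.branches X u) (hcx : T.Anc c x) : T.IsTooth X x u := by
  obtain ⟨huc, hdc⟩ := T.anc_and_depth_of_mem_branches hc
  rcases hu with hu | hu
  · exact ⟨u, hu, T.anc_refl u, .inl rfl⟩
  obtain ⟨c', hc', hc'c⟩ := exists_mem_ne hu c
  obtain ⟨z, hz, ⟨huz, -⟩, rfl⟩ := T.mem_branches.1 hc'
  refine ⟨z, hz, huz, .inr ?_⟩
  rwa [T.child_eq_of_anc hdc hcx]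

lemma card_toothDepths_lt {c : V} (hc : c ∈ T.branches X u) (hcx : T.Anc c x)
    (hu : T.IsTooth X x u) : #(T.toothDepths X c x) < #(T.toothDepths X u x) := by
  obtain ⟨huc, hdc⟩ := T.anc_and_depth_of_mem_branches hc
  refine card_lt_card ((ssubset_iff_of_subset (T.toothDepths_subset (by omega))).2 ?_)
  refine ⟨T.depth u, T.mem_toothDepths_of_isTooth (huc.trans hcx) hu, fun h => ?_⟩
  simp only [toothDepths, mem_filter, mem_Icc] at h
  omega

open Classical in
lemma card_filter_anc_le_pow_of_branches {s t : ℕ} (hs : #(T.branches X u) < s)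
    (ht : ∀ x ∈ X, T.Anc u x → #(T.toothDepths X u x) ≤ t)
    (ih : ∀ c ∈ T.branches X u, ∀ t',
      (∀ x ∈ X, T.Anc c x → #(T.toothDepths X c x) ≤ t') →
        #{x ∈ X | T.Anc c x} ≤ s ^ t') :
    #{x ∈ X | T.Anc u x} ≤ s ^ t := by
  obtain hempty | ⟨x₀, hx₀⟩ := {x ∈ X | T.Anc u x}.eq_empty_or_nonempty
  · simp [hempty]
  rw [mem_filter] at hx₀
  have hsplit := T.card_filter_anc_le (X := X) u
  by_cases hbranch : u ∈ X ∨ 1 < #(T.branches X u)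
  -- then `u` is a tooth of every member of `X` below a branch, which has one tooth fewer
  · have ht₀ : 0 < t := (card_pos.2 ⟨_, T.depth_mem_toothDepths hx₀.1 hx₀.2⟩).trans_le
      (ht x₀ hx₀.1 hx₀.2)
    have hchild : ∀ c ∈ T.branches X u, #{x ∈ X | T.Anc c x} ≤ s ^ (t - 1) := by
      refine fun c hc => ih c hc _ fun x hx hcx => ?_
      have := T.card_toothDepths_lt hc hcx (T.isTooth_of_branching hbranch hc hcx)
      have := ht x hx ((T.anc_and_depth_of_mem_branches hc).1.trans hcx)
      omega
    have hu : (if u ∈ X then 1 else 0) ≤ 1 := by split_ifs <;> omega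
    have hpow : 1 ≤ s ^ (t - 1) := Nat.one_le_pow _ _ (by omega)
    calc #{x ∈ X | T.Anc u x}
        ≤ 1 + #(T.branches X u) * s ^ (t - 1) :=
          hsplit.trans (Nat.add_le_add hu (sum_le_card_nsmul _ _ _ hchild))
      _ ≤ (#(T.branches X u) + 1) * s ^ (t - 1) := by rw [add_mul]; omega
      _ ≤ s * s ^ (t - 1) := Nat.mul_le_mul_right _ hs
      _ = s ^ t := by rw [← pow_succ']; congr 1; omega
  · push Not at hbranch
    have hchild : ∀ c ∈ T.branches X u, #{x ∈ X | T.Anc c x} ≤ s ^ t := by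
      refine fun c hc => ih c hc _ fun x hx hcx => ?_
      obtain ⟨huc, hdc⟩ := T.anc_and_depth_of_mem_branches hc
      exact (card_le_card (T.toothDepths_subset (by omega))).trans (ht x hx (huc.trans hcx))
    rw [if_neg hbranch.1, zero_add] at hsplit
    calc #{x ∈ X | T.Anc u x}
        ≤ #(T.branches X u) * s ^ t := hsplit.trans (sum_le_card_nsmul _ _ _ hchild)
      _ ≤ 1 * s ^ t := Nat.mul_le_mul_right _ hbranch.2
      _ = s ^ t := one_mul _

open Classical in
lemma card_filter_anc_le_pow {s : ℕ} (hs : ∀ u, #(T.branches X u) < s) {D t : ℕ}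
    (hD : ∀ x ∈ X, T.Anc u x → T.depth x ≤ T.depth u + D)
    (ht : ∀ x ∈ X, T.Anc u x → #(T.toothDepths X u x) ≤ t) :
    #{x ∈ X | T.Anc u x} ≤ s ^ t := by
  induction D generalizing u t with
  | zero =>
    refine T.card_filter_anc_le_pow_of_branches (hs u) ht fun c hc => ?_
    obtain ⟨x, hx, ⟨hux, hxu⟩, -⟩ := T.mem_branches.1 hc
    have := hD x hx hux
    have := hux.depth_lt (Ne.symm hxu)
    omega
  | succ D ih =>
    refine T.card_filter_anc_le_pow_of_branches (hs u) ht fun c hc t' ht' =>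
      ih (fun x hx hcx => ?_) ht'
    obtain ⟨huc, hdc⟩ := T.anc_and_depth_of_mem_branches hc
    have := hD x hx (huc.trans hcx)
    omega

lemma nonempty_star_of_le_card_branches {s : ℕ} (h : s ≤ #(T.branches X u)) :
    Nonempty (T.Star X s) := by
  obtain ⟨e⟩ : Nonempty (Fin s ↪ T.branches X u) :=
    Function.Embedding.nonempty_of_card_le (by simpa using h)
  choose x hx hux hchild using fun i => T.mem_branches.1 (e i).2
  refine ⟨⟨u, x, hx, fun i => (hux i).1, fun i => (hux i).2, fun i j hij => e.injective ?_⟩⟩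
  exact Subtype.ext ((hchild i).symm.trans (hij.trans (hchild j)))

lemma nonempty_comb_of_le_card_toothDepths {s : ℕ} (h : s ≤ #(T.toothDepths X T.root x)) :
    Nonempty (T.Comb X s) := by
  set e := (T.toothDepths X T.root x).orderEmbOfFin rfl
  have he : ∀ i, e i ≤ T.depth x ∧ T.IsTooth X x (T.ancAt x (e i)) := fun i => by
    have := orderEmbOfFin_mem (T.toothDepths X T.root x) rfl i
    simp only [toothDepths, mem_filter, mem_Icc] at this
    exact ⟨this.1.2, this.2⟩
  refine ⟨⟨x, fun i => T.ancAt x (e (i.castLE h)), fun i => T.anc_ancAt (he _).1,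
    fun i j hij => ?_, fun i => (he _).2⟩⟩
  simp only [Function.comp_apply]
  rw [T.depth_ancAt (he _).1, T.depth_ancAt (he _).1]
  exact e.strictMono ((Fin.castLE_lt_castLE_iff h).2 hij)

theorem nonempty_star_or_comb {s : ℕ} (hX : s ^ s < #X) :
    Nonempty (T.Star X s) ∨ Nonempty (T.Comb X s) := by
  classical
  by_contra h
  rw [not_or] at h
  have hs : ∀ u, #(T.branches X u) < s := fun u =>
    not_le.1 fun hu => h.1 (T.nonempty_star_of_le_card_branches hu)
  have ht : ∀ x ∈ X, T.Anc T.root x → #(T.toothDepths X T.root x) ≤ s := fun x _ _ =>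
    (not_le.1 fun hx => h.2 (T.nonempty_comb_of_le_card_toothDepths hx)).le
  have hD : ∀ x ∈ X, T.Anc T.root x → T.depth x ≤ T.depth T.root + X.sup T.depth :=
    fun x hx _ => by rw [T.depth_root, zero_add]; exact le_sup hx
  have hcard := T.card_filter_anc_le_pow hs hD ht
  rw [filter_true_of_mem fun x _ => T.anc_root x] at hcard
  omega

variable {T} {s : ℕ}

lemma Star.interval_inter_interval (P : T.Star X s) {i j : Fin s} (hij : i ≠ j) :
    T.interval P.center (P.leaf i) ∩ T.interval P.center (P.leaf j) = {P.center} := by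
  ext a
  simp only [interval, Set.mem_inter_iff, Set.mem_ofPred_eq, Set.mem_singleton_iff]
  constructor
  · rintro ⟨⟨hca, hai⟩, -, haj⟩
    by_contra hne
    refine hij (P.child_injective ?_)
    change T.child P.center (P.leaf i) = T.child P.center (P.leaf j)
    rw [hca.child_eq (Ne.symm hne) hai, hca.child_eq (Ne.symm hne) haj]
  · rintro rfl
    exact ⟨⟨T.anc_refl _, P.anc_leaf i⟩, T.anc_refl _, P.anc_leaf j⟩

namespace Comb

variable (P : T.Comb X s)

noncomputable def tooth (i : Fin s) : V := (P.isTooth i).choose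

lemma tooth_mem (i : Fin s) : P.tooth i ∈ X := (P.isTooth i).choose_spec.1

lemma anc_tooth (i : Fin s) : T.Anc (P.spine i) (P.tooth i) := (P.isTooth i).choose_spec.2.1

lemma tooth_eq_or_child_ne (i : Fin s) :
    P.tooth i = P.spine i ∨ T.child (P.spine i) (P.tooth i) ≠ T.child (P.spine i) P.tip :=
  (P.isTooth i).choose_spec.2.2

lemma anc_spine_of_le {i j : Fin s} (hij : i ≤ j) : T.Anc (P.spine i) (P.spine j) :=
  (P.anc_spine i).of_depth_le (P.anc_spine j) (P.strictMono_depth_spine.monotone hij)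

lemma spine_injective : Function.Injective P.spine :=
  fun _ _ h => P.strictMono_depth_spine.injective (congrArg T.depth h)

/-- The tooth of `P.spine i` leaves the path to the tip right at `P.spine i`. -/
lemma not_anc_tooth {i : Fin s} {w : V} (hw : T.Anc w P.tip)
    (hlt : T.depth (P.spine i) < T.depth w) : ¬ T.Anc w (P.tooth i) := by
  intro hwz
  have hyw : T.Anc (P.spine i) w := (P.anc_spine i).of_depth_le hw hlt.le
  have hne : P.spine i ≠ w := fun h => hlt.ne (congrArg T.depth h)
  rcases P.tooth_eq_or_child_ne i with hz | hz
  · rw [hz] at hwz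
    exact absurd hwz.depth_le (not_le.2 hlt)
  · exact hz (by rw [hyw.child_eq hne hwz, hyw.child_eq hne hw])

lemma disjoint_interval_tooth {i j : Fin s} (hij : i ≠ j) :
    Disjoint (T.interval (P.spine i) (P.tooth i)) (T.interval (P.spine j) (P.tooth j)) := by
  wlog hlt : i < j generalizing i j
  · exact (this (Ne.symm hij) (lt_of_le_of_ne (not_lt.1 hlt) (Ne.symm hij))).symm
  refine Set.disjoint_left.2 fun a ⟨_, hai⟩ ⟨hja, _⟩ => ?_
  exact P.not_anc_tooth (P.anc_spine j) (P.strictMono_depth_spine hlt) (hja.trans hai)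

lemma interval_tooth_inter_interval_spine_subset (i j : Fin s) (hj : (j : ℕ) + 1 < s) :
    T.interval (P.spine i) (P.tooth i) ∩ T.interval (P.spine j) (P.spine ⟨j + 1, hj⟩) ⊆
      {P.spine i} ∩ {P.spine j, P.spine ⟨j + 1, hj⟩} := by
  rintro a ⟨⟨hia, haz⟩, hja, haj'⟩
  have hat : T.Anc a P.tip := haj'.trans (P.anc_spine _)
  have hai : a = P.spine i := by
    by_contra hne
    exact P.not_anc_tooth hat (hia.depth_lt (Ne.symm hne)) haz
  subst hai
  have h₁ := P.strictMono_depth_spine.le_iff_le.1 hja.depth_le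
  have h₂ := P.strictMono_depth_spine.le_iff_le.1 haj'.depth_le
  rw [Fin.le_def] at h₁ h₂
  refine ⟨rfl, ?_⟩
  rcases Nat.le_add_one_iff.1 h₂ with h | h
  · exact .inl (congrArg P.spine (Fin.ext (le_antisymm h h₁)))
  · exact .inr (congrArg P.spine (Fin.ext h))

lemma interval_spine_inter_interval_spine_subset {i j : Fin s} (hi : (i : ℕ) + 1 < s)
    (hj : (j : ℕ) + 1 < s) (hij : i ≠ j) :
    T.interval (P.spine i) (P.spine ⟨i + 1, hi⟩) ∩
        T.interval (P.spine j) (P.spine ⟨j + 1, hj⟩) ⊆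
      {P.spine i, P.spine ⟨i + 1, hi⟩} ∩ {P.spine j, P.spine ⟨j + 1, hj⟩} := by
  wlog hlt : i < j generalizing i j
  · rw [Set.inter_comm, Set.inter_comm {P.spine i, _}]
    exact this hj hi (Ne.symm hij) (lt_of_le_of_ne (not_lt.1 hlt) (Ne.symm hij))
  rintro a ⟨⟨-, hai⟩, hja, -⟩
  have hle : (⟨i + 1, hi⟩ : Fin s) ≤ j := Fin.le_def.2 (Nat.succ_le_of_lt hlt)
  have hd := P.strictMono_depth_spine.monotone hle
  have hdi := hai.depth_le
  have hdj := hja.depth_le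
  simp only [Function.comp_apply] at hd
  have hsucc : (⟨i + 1, hi⟩ : Fin s) = j :=
    P.strictMono_depth_spine.injective (by simp only [Function.comp_apply]; omega)
  subst hsucc
  have ha : a = P.spine ⟨i + 1, hi⟩ :=
    (hai.trans (P.anc_spine _)).eq_of_depth_eq (P.anc_spine _) (by omega)
  exact ⟨.inr ha, .inl ha⟩

end Comb

end StarComb

lemma _root_.SimpleGraph.Connected.nonempty_rootedSpanningTree (hH : H.Connected) :
    Nonempty (RootedSpanningTree H) := by
  obtain ⟨r⟩ := hH.nonempty
  have hparent : ∀ u, u ≠ r → ∃ w, H.Adj w u ∧ H.dist r w + 1 = H.dist r u := by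
    intro u hu
    obtain ⟨q, hq⟩ := hH.exists_walk_length_eq_dist u r
    cases q with
    | nil => exact absurd rfl hu
    | cons hadj q =>
      refine ⟨_, hadj.symm, ?_⟩
      have h₁ : H.dist _ r ≤ q.length := dist_le q
      have h₂ := hadj.symm.diff_dist_adj (u := r)
      have h₃ := hH.pos_dist_of_ne hu.symm
      rw [Walk.length_cons, dist_comm] at hq
      rw [dist_comm] at h₁
      omega
  classical
  choose p hp using hparent
  exact ⟨{
    root := r
    parent := fun u => if h : u = r then r else p u h
    depth := H.dist r
    depth_root := dist_self
    adj_parent := fun u hu => by simpa [hu] using (hp u hu).1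
    depth_parent := fun u hu => by simpa [hu] using (hp u hu).2 }⟩

end RootedSpanningTree

section Embedding

variable {V W : Type*} {H : SimpleGraph V} {G : SimpleGraph W} (φ : H ↪g G) {v : W}

lemma setOf_mem_support_map {a b : V} (p : H.Walk a b) :
    {y | y ∈ (p.map φ.toHom).support} = φ '' {x | x ∈ p.support} := by
  ext y
  simp [Walk.support_map]

lemma setOf_mem_support_cons_map {a b : V} (h : G.Adj v (φ a)) (p : H.Walk a b) :
    {y | y ∈ (Walk.cons h (p.map φ.toHom)).support} =
      insert v (φ '' {x | x ∈ p.support}) := by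
  rw [← setOf_mem_support_map]
  ext y
  simp

lemma not_mem_support_map (hv : ∀ a, φ a ≠ v) {a b : V} (p : H.Walk a b) :
    v ∉ (p.map φ.toHom).support := by
  simp only [Walk.support_map, List.mem_map, not_exists, not_and]
  exact fun a _ => hv a

lemma isPath_cons_map (hv : ∀ a, φ a ≠ v) {a b : V} (h : G.Adj v (φ a)) {p : H.Walk a b}
    (hp : p.IsPath) : (Walk.cons h (p.map φ.toHom)).IsPath :=
  (hp.map φ.injective).cons (not_mem_support_map φ hv p)

end Embedding

namespace RootedSpanningTree

variable {V W : Type*} {H : SimpleGraph V} {G : SimpleGraph W} {T : RootedSpanningTree H}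
  {X : Finset V} {s : ℕ} (φ : H ↪g G) {v : W}

def Star.toDipole (P : T.Star X s) (hv : ∀ a, φ a ≠ v) (hX : ∀ x ∈ X, G.Adj v (φ x)) :
    DipoleSubdivision G v (φ P.center) s where
  path i := .cons (hX _ (P.leaf_mem i)) ((T.pathTo (P.anc_leaf i)).map φ.toHom)
  isPath i := isPath_cons_map φ hv _ (T.isPath_pathTo _)
  len i := by
    have := (P.anc_leaf i).depth_lt (P.leaf_ne i).symm
    simp only [Walk.length_cons, Walk.length_map, T.length_pathTo]
    omega
  disj i j hij := by
    rw [setOf_mem_support_cons_map, setOf_mem_support_cons_map, ← Set.insert_inter_distrib,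
      T.setOf_mem_support_pathTo, T.setOf_mem_support_pathTo, ← Set.image_inter φ.injective,
      P.interval_inter_interval hij, Set.image_singleton]

noncomputable def Comb.toFan (P : T.Comb X s) (hv : ∀ a, φ a ≠ v)
    (hX : ∀ x ∈ X, G.Adj v (φ x)) : FanSubdivision G v s where
  b i := φ (P.spine i)
  binj := φ.injective.comp P.spine_injective
  bne i := hv _
  spoke i := .cons (hX _ (P.tooth_mem i)) ((T.pathTo (P.anc_tooth i)).map φ.toHom)
  spokePath i := isPath_cons_map φ hv _ (T.isPath_pathTo _)
  seg i h := (T.pathTo (P.anc_spine_of_le (Fin.le_def.2 (Nat.le_succ i)) :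
    T.Anc (P.spine i) (P.spine ⟨i + 1, h⟩))).reverse.map φ.toHom
  segPath i h := (T.isPath_pathTo _).reverse.map φ.injective
  vNotinSeg i h := not_mem_support_map φ hv _
  spokeDisj i j hij := by
    rw [setOf_mem_support_cons_map, setOf_mem_support_cons_map, ← Set.insert_inter_distrib,
      ← Set.image_inter φ.injective, T.setOf_mem_support_pathTo, T.setOf_mem_support_pathTo,
      (P.disjoint_interval_tooth hij).inter_eq, Set.image_empty, insert_empty_eq]
  spokeSegDisj i j h := by
    rw [setOf_mem_support_cons_map, setOf_mem_support_map, Set.insert_inter_of_notMem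
      (fun hv' => by obtain ⟨a, -, ha⟩ := hv'; exact hv a ha), ← Set.image_inter φ.injective,
      T.setOf_mem_support_pathTo, T.setOf_mem_support_pathTo_reverse]
    refine (Set.image_mono (P.interval_tooth_inter_interval_spine_subset i j h)).trans ?_
    rw [Set.image_inter φ.injective, Set.image_singleton, Set.image_pair]
  segDisj i j hi hj hij := by
    rw [setOf_mem_support_map, setOf_mem_support_map, ← Set.image_inter φ.injective,
      T.setOf_mem_support_pathTo_reverse, T.setOf_mem_support_pathTo_reverse]
    refine (Set.image_mono (P.interval_spine_inter_interval_spine_subset hi hj hij)).trans ?_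
    rw [Set.image_inter φ.injective, Set.image_pair, Set.image_pair]

end RootedSpanningTree

open RootedSpanningTree in
theorem exists_fan_or_dipole_of_connected {V W : Type*} {H : SimpleGraph V} {G : SimpleGraph W}
    (φ : H ↪g G) (hH : H.Connected) {v : W} (hv : ∀ a, φ a ≠ v) {X : Set V}
    (hX : ∀ x ∈ X, G.Adj v (φ x)) {s : ℕ} (hcard : s ^ s < X.ncard) :
    (∃ c, Nonempty (FanSubdivision G c s)) ∨
      ∃ a b, a ≠ b ∧ Nonempty (DipoleSubdivision G a b s) := by
  have hfin : X.Finite := Set.finite_of_ncard_pos (by omega)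
  have hX' : ∀ x ∈ hfin.toFinset, G.Adj v (φ x) := fun x hx => hX x (hfin.mem_toFinset.1 hx)
  rw [Set.ncard_eq_toFinset_card X hfin] at hcard
  obtain ⟨T⟩ := hH.nonempty_rootedSpanningTree
  rcases T.nonempty_star_or_comb hcard with hstar | hcomb
  · obtain ⟨P⟩ := hstar
    exact .inr ⟨v, φ P.center, (hv _).symm, ⟨P.toDipole φ hv hX'⟩⟩
  · obtain ⟨P⟩ := hcomb
    exact .inl ⟨v, ⟨P.toFan φ hv hX'⟩⟩

/-- a vertex of large degree inside a block forces a large subdivided fan or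
a large subdivided dipole. -/
theorem fan_or_dipole_of_block_degree :
    ∃ f : ℕ → ℕ, ∀ (V : Type) (G : SimpleGraph V) (S : Set V) (v : V) (s : ℕ),
      IsBlock G S → v ∈ S → f s ≤ {w ∈ S | G.Adj v w}.ncard →
      (∃ c : V, Nonempty (FanSubdivision G c s)) ∨
        (∃ a b : V, a ≠ b ∧ Nonempty (DipoleSubdivision G a b s)) := by
  refine ⟨fun s => s ^ s + 1, fun V G S v s hS hvS hdeg => ?_⟩
  set N := {w ∈ S | G.Adj v w}
  have hNS : N ⊆ Set.range ((↑) : ↥(S \ {v}) → V) := fun w ⟨hwS, hvw⟩ =>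
    ⟨⟨w, hwS, hvw.ne.symm⟩, rfl⟩
  set X := ((↑) : ↥(S \ {v}) → V) ⁻¹' N
  have hcard : X.ncard = N.ncard :=
    Set.ncard_preimage_of_injective_subset_range Subtype.val_injective hNS
  have hdeg : s ^ s + 1 ≤ N.ncard := hdeg
  obtain ⟨w₀, -⟩ := Set.nonempty_of_ncard_ne_zero (by omega : X.ncard ≠ 0)
  have : Nonempty ↥(S \ {v}) := ⟨w₀⟩
  exact exists_fan_or_dipole_of_connected (Embedding.induce _) ⟨hS.2.2.1 v hvS⟩
    (fun a h => a.2.2 h) (X := X) (fun x hx => hx.2) (by omega)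
end

section
/- Let G be a graph that excludes the k-fan F_k as a topological minor. Then for every vertex v of G, the rooted treedepth td(G − v, N(v)) is at most C(k,2) = k(k−1)/2, assuming the following lemma: if a graph H has no U-rooted P_k minor, then td(H,U) ≤ C(k,2). -/
open SimpleGraph

/-!
A subdivided `k`-fan centered at `v` is `v` together with a comb in `G - v` whose `k` teeth end
in `N(v)`, and an `N(v)`-rooted `P_k` minor of `G - v` contains such a comb. In the `i`-th branch
set pick a root `u i ∈ N(v)` and the ends `x i`, `y i` of the edges to the previous and next
branch sets, and join `u i`, `x i`, `y i` by a tripod with center `c i`. The `c i` are the branch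
vertices of the fan: the spoke to `c i` enters through `u i`, and the segment from `c i` to
`c (i + 1)` uses the edge `y i x (i + 1)`. Paths in different branch sets are disjoint, and legs of
one tripod meet only at its center, which gives all the required disjointness. Hence excluding
`F_k` rules out `N(v)`-rooted `P_k` minors in `G - v`, and the assumed lemma bounds the rooted
treedepth.
-/

namespace SimpleGraph

variable {V W : Type*} {G : SimpleGraph V} {H : SimpleGraph W}

theorem Connected.induce_image (f : H →g G) {s : Set W} (hs : (H.induce s).Connected) :
    (G.induce (f '' s)).Connected :=
  hs.map (⟨fun w => ⟨f w, Set.mem_image_of_mem f w.2⟩, fun h => f.map_adj h⟩ :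
      H.induce s →g G.induce (f '' s))
    (by rintro ⟨_, w, hw, rfl⟩; exact ⟨⟨w, hw⟩, rfl⟩)

theorem Connected.exists_isPath_support_subset {B : Set V} (hB : (G.induce B).Connected)
    {p q : V} (hp : p ∈ B) (hq : q ∈ B) :
    ∃ P : G.Walk p q, P.IsPath ∧ ∀ z ∈ P.support, z ∈ B := by
  obtain ⟨P, hP⟩ := (hB.preconnected ⟨p, hp⟩ ⟨q, hq⟩).exists_isPath
  let Q : G.Walk p q := P.map (Embedding.induce B).toHom
  have hQ : Q.support = P.support.map Subtype.val := Walk.support_map _ _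
  refine ⟨Q, hP.map Subtype.val_injective, fun z hz => ?_⟩
  obtain ⟨w, -, rfl⟩ := List.mem_map.mp (hQ ▸ hz)
  exact w.2

theorem Walk.IsPath.eq_of_mem_support_takeUntil_of_mem_support_dropUntil [DecidableEq V]
    {u v w z : V} {p : G.Walk u v} (hp : p.IsPath) (hw : w ∈ p.support)
    (h₁ : z ∈ (p.takeUntil w hw).support) (h₂ : z ∈ (p.dropUntil w hw).support) :
    z = w := by
  have hnd := hp.support_nodup
  rw [← p.take_spec hw, Walk.support_append] at hnd
  rw [← Walk.cons_tail_support (p.dropUntil w hw)] at h₂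
  exact (List.mem_cons.mp h₂).resolve_right (List.disjoint_of_nodup_append hnd h₁)

/-- Legs may be trivial and the ends `p`, `q`, `r` need not be distinct. -/
structure Tripod (G : SimpleGraph V) (B : Set V) (p q r : V) where
  center : V
  legP : G.Walk center p
  legQ : G.Walk center q
  legR : G.Walk center r
  isPath_legP : legP.IsPath
  isPath_legQ : legQ.IsPath
  isPath_legR : legR.IsPath
  legP_subset : ∀ z ∈ legP.support, z ∈ B
  legQ_subset : ∀ z ∈ legQ.support, z ∈ B
  legR_subset : ∀ z ∈ legR.support, z ∈ B
  eq_center_of_mem_legP_legQ : ∀ z ∈ legP.support, z ∈ legQ.support → z = center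
  eq_center_of_mem_legP_legR : ∀ z ∈ legP.support, z ∈ legR.support → z = center
  eq_center_of_mem_legQ_legR : ∀ z ∈ legQ.support, z ∈ legR.support → z = center

namespace Tripod

variable {B : Set V} {p q r : V}

theorem center_mem (T : Tripod G B p q r) : T.center ∈ B :=
  T.legP_subset _ T.legP.start_mem_support

/-- The center is where a `p`–`q` path first hits a `q`–`r` path. -/
theorem nonempty (hB : (G.induce B).Connected) (hp : p ∈ B) (hq : q ∈ B) (hr : r ∈ B) :
    Nonempty (Tripod G B p q r) := by
  classical
  obtain ⟨P, hP, hPB⟩ := hB.exists_isPath_support_subset hq hr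
  obtain ⟨R, hR, hRB⟩ := hB.exists_isPath_support_subset hp hq
  obtain ⟨c, hcP, hcR, hfirst⟩ :=
    R.exists_mem_support_forall_mem_support_imp_eq P.support.toFinset
      ⟨q, by simp⟩
  rw [List.mem_toFinset] at hcP
  have hfirst' : ∀ z ∈ (R.takeUntil c hcR).reverse.support, z ∈ P.support → z = c := by
    intro z hzR hzP
    exact hfirst z (List.mem_toFinset.mpr hzP) (by simpa using hzR)
  exact ⟨{
    center := c
    legP := (R.takeUntil c hcR).reverse
    legQ := (P.takeUntil c hcP).reverse
    legR := P.dropUntil c hcP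
    isPath_legP := (hR.takeUntil hcR).reverse
    isPath_legQ := (hP.takeUntil hcP).reverse
    isPath_legR := hP.dropUntil hcP
    legP_subset := fun z hz =>
      hRB z (R.support_takeUntil_subset_support hcR (by simpa using hz))
    legQ_subset := fun z hz =>
      hPB z (P.support_takeUntil_subset_support hcP (by simpa using hz))
    legR_subset := fun z hz => hPB z (P.support_dropUntil_subset_support hcP hz)
    eq_center_of_mem_legP_legQ := fun z hzR hzP =>
      hfirst' z hzR (P.support_takeUntil_subset_support hcP (by simpa using hzP))
    eq_center_of_mem_legP_legR := fun z hzR hzP =>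
      hfirst' z hzR (P.support_dropUntil_subset_support hcP hzP)
    eq_center_of_mem_legQ_legR := fun z hz₁ hz₂ =>
      hP.eq_of_mem_support_takeUntil_of_mem_support_dropUntil hcP (by simpa using hz₁) hz₂ }⟩

end Tripod

end SimpleGraph

namespace RootedPathMinor

variable {V W : Type*} {G : SimpleGraph V} {H : SimpleGraph W} {U : Set V} {k : ℕ}

def map {X : Set W} (M : RootedPathMinor H X k) (f : H ↪g G) : RootedPathMinor G (f '' X) k where
  branch i := f '' M.branch i
  connected i := (M.connected i).induce_image f.toHom
  disjoint i j hij := (Set.disjoint_image_iff f.injective).mpr (M.disjoint i j hij)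
  rooted i := by
    rw [← Set.image_inter f.injective]
    exact (M.rooted i).image f
  adj i j hij := by
    obtain ⟨a, ha, b, hb, hab⟩ := M.adj i j hij
    exact ⟨f a, Set.mem_image_of_mem f ha, f b, Set.mem_image_of_mem f hb,
      f.map_adj_iff.mpr hab⟩

theorem eq_of_mem_branch (M : RootedPathMinor G U k) {i j : Fin k} {z : V}
    (hi : z ∈ M.branch i) (hj : z ∈ M.branch j) : i = j := by
  by_contra hij
  exact Set.disjoint_left.mp (M.disjoint i j hij) hi hj

theorem exists_linking_vertices (M : RootedPathMinor G U k) :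
    ∃ x y : Fin k → V, (∀ i, x i ∈ M.branch i) ∧ (∀ i, y i ∈ M.branch i) ∧
      ∀ i j : Fin k, (j : ℕ) = i + 1 → G.Adj (y i) (x j) := by
  choose a ha b hb hab using fun (j : Fin k) (hj : 0 < (j : ℕ)) =>
    M.adj ⟨j - 1, by omega⟩ j (by simp; omega)
  choose d hd using M.rooted
  refine ⟨fun j => if hj : 0 < (j : ℕ) then b j hj else d j,
    fun i => if hi : (i : ℕ) + 1 < k then a ⟨i + 1, hi⟩ (Nat.succ_pos _) else d i,
    ?_, ?_, ?_⟩
  · intro j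
    by_cases hj : 0 < (j : ℕ)
    · simpa [hj] using hb j hj
    · simpa [hj] using (hd j).1
  · intro i
    by_cases hi : (i : ℕ) + 1 < k
    · simpa [hi] using ha ⟨i + 1, hi⟩ (Nat.succ_pos _)
    · simpa [hi] using (hd i).1
  · intro i j hij
    obtain ⟨j, hj⟩ := j
    obtain rfl : j = i + 1 := hij
    simpa [hj] using hab ⟨i + 1, hj⟩ (Nat.succ_pos _)

section Fan

open SimpleGraph.Walk

variable {M : RootedPathMinor G U k} {v : V} {u x y : Fin k → V} (hu : ∀ i, G.Adj v (u i))
  (hxy : ∀ i j : Fin k, (j : ℕ) = i + 1 → G.Adj (y i) (x j))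
  (T : ∀ i, Tripod G (M.branch i) (u i) (x i) (y i))

def spoke (i : Fin k) : G.Walk v (T i).center := .cons (hu i) (T i).legP.reverse

def seg (i : Fin k) (h : (i : ℕ) + 1 < k) : G.Walk (T i).center (T ⟨i + 1, h⟩).center :=
  (T i).legR.append (.cons (hxy i ⟨i + 1, h⟩ rfl) (T ⟨i + 1, h⟩).legQ.reverse)

theorem mem_support_spoke {i : Fin k} {z : V} :
    z ∈ (spoke hu T i).support ↔ z = v ∨ z ∈ (T i).legP.support := by
  simp [spoke]

theorem mem_support_seg {i : Fin k} {h : (i : ℕ) + 1 < k} {z : V} :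
    z ∈ (seg hxy T i h).support ↔
      z ∈ (T i).legR.support ∨ z ∈ (T ⟨i + 1, h⟩).legQ.support := by
  simp [seg, support_append]

theorem isPath_spoke (hv : ∀ i, v ∉ M.branch i) (i : Fin k) : (spoke hu T i).IsPath :=
  (T i).isPath_legP.reverse.cons fun h => hv i ((T i).legP_subset v (by simpa using h))

theorem isPath_seg (i : Fin k) (h : (i : ℕ) + 1 < k) : (seg hxy T i h).IsPath := by
  rw [seg, isPath_def, support_append, support_cons, List.tail_cons, support_reverse]
  refine (T i).isPath_legR.support_nodup.append
    (List.nodup_reverse.mpr (T _).isPath_legQ.support_nodup) ?_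
  intro z hzR hzQ
  have := M.eq_of_mem_branch ((T i).legR_subset z hzR)
    ((T _).legQ_subset z (List.mem_reverse.mp hzQ))
  simp [Fin.ext_iff] at this

theorem notMem_support_seg (hv : ∀ i, v ∉ M.branch i) (i : Fin k) (h : (i : ℕ) + 1 < k) :
    v ∉ (seg hxy T i h).support := by
  rw [mem_support_seg]
  rintro (hvR | hvQ)
  · exact hv i ((T i).legR_subset v hvR)
  · exact hv _ ((T _).legQ_subset v hvQ)

theorem inter_support_spoke {i j : Fin k} (hij : i ≠ j) :
    {z | z ∈ (spoke hu T i).support} ∩ {z | z ∈ (spoke hu T j).support} = {v} := by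
  ext z
  simp only [Set.mem_inter_iff, Set.mem_ofPred_eq, mem_support_spoke, Set.mem_singleton_iff]
  refine ⟨?_, fun hz => ⟨.inl hz, .inl hz⟩⟩
  rintro ⟨hzi | hzi, hzj⟩
  · exact hzi
  rcases hzj with hzj | hzj
  · exact hzj
  exact (hij (M.eq_of_mem_branch ((T i).legP_subset z hzi) ((T j).legP_subset z hzj))).elim

theorem inter_support_spoke_seg_subset (hv : ∀ i, v ∉ M.branch i) (i j : Fin k)
    (h : (j : ℕ) + 1 < k) :
    {z | z ∈ (spoke hu T i).support} ∩ {z | z ∈ (seg hxy T j h).support} ⊆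
      ({(T i).center} : Set V) ∩ {(T j).center, (T ⟨j + 1, h⟩).center} := by
  rintro z ⟨hzi, hzj⟩
  rcases (mem_support_spoke hu T).mp hzi with rfl | hzi
  · exact absurd hzj (notMem_support_seg hxy T hv j h)
  rcases (mem_support_seg hxy T).mp hzj with hzj | hzj
  · obtain rfl := M.eq_of_mem_branch ((T i).legP_subset z hzi) ((T j).legR_subset z hzj)
    have hz := (T i).eq_center_of_mem_legP_legR z hzi hzj
    exact ⟨hz, .inl hz⟩
  · obtain rfl := M.eq_of_mem_branch ((T i).legP_subset z hzi) ((T _).legQ_subset z hzj)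
    have hz := (T _).eq_center_of_mem_legP_legQ z hzi hzj
    exact ⟨hz, .inr hz⟩

theorem inter_support_seg_subset {i j : Fin k} (hi : (i : ℕ) + 1 < k) (hj : (j : ℕ) + 1 < k)
    (hij : i ≠ j) :
    {z | z ∈ (seg hxy T i hi).support} ∩ {z | z ∈ (seg hxy T j hj).support} ⊆
      ({(T i).center, (T ⟨i + 1, hi⟩).center} : Set V) ∩
        {(T j).center, (T ⟨j + 1, hj⟩).center} := by
  rintro z ⟨hzi, hzj⟩
  rcases (mem_support_seg hxy T).mp hzi with hzi | hzi <;>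
    rcases (mem_support_seg hxy T).mp hzj with hzj | hzj
  · exact (hij (M.eq_of_mem_branch ((T i).legR_subset z hzi) ((T j).legR_subset z hzj))).elim
  · obtain rfl := M.eq_of_mem_branch ((T i).legR_subset z hzi) ((T _).legQ_subset z hzj)
    have hz := (T _).eq_center_of_mem_legQ_legR z hzj hzi
    exact ⟨.inl hz, .inr hz⟩
  · obtain rfl := M.eq_of_mem_branch ((T _).legQ_subset z hzi) ((T j).legR_subset z hzj)
    have hz := (T _).eq_center_of_mem_legQ_legR z hzi hzj
    exact ⟨.inr hz, .inl hz⟩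
  · have := M.eq_of_mem_branch ((T _).legQ_subset z hzi) ((T _).legQ_subset z hzj)
    exact (hij (Fin.ext (by simpa using this))).elim

def toFanSubdivision (hv : ∀ i, v ∉ M.branch i) : FanSubdivision G v k where
  b i := (T i).center
  binj i j hij := M.eq_of_mem_branch (T i).center_mem
    (by rw [show (T i).center = (T j).center from hij]; exact (T j).center_mem)
  bne i h := hv i (h ▸ (T i).center_mem)
  spoke := spoke hu T
  spokePath := isPath_spoke hu T hv
  seg := seg hxy T
  segPath := isPath_seg hxy T
  vNotinSeg := notMem_support_seg hxy T hv
  spokeDisj _ _ := inter_support_spoke hu T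
  spokeSegDisj := inter_support_spoke_seg_subset hu hxy T hv
  segDisj _ _ := inter_support_seg_subset hxy T

end Fan

theorem nonempty_fanSubdivision {v : V} (M : RootedPathMinor G U k)
    (hU : U ⊆ G.neighborSet v) (hv : ∀ i, v ∉ M.branch i) :
    Nonempty (FanSubdivision G v k) := by
  choose u hu using M.rooted
  obtain ⟨x, y, hx, hy, hxy⟩ := M.exists_linking_vertices
  have T i := (Tripod.nonempty (M.connected i) (hu i).1 (hx i) (hy i)).some
  exact ⟨toFanSubdivision (fun i => hU (hu i).2) hxy T hv⟩

end RootedPathMinor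

/-- if `G` excludes the `k`-fan as a topological minor then, given the lemma
bounding rooted treedepth by the absence of rooted path minors, for every vertex `v` the
rooted treedepth `td(G - v, N(v))` is at most `k(k-1)/2`. -/
theorem rooted_treedepth_of_no_fan (k : ℕ) {V : Type} (G : SimpleGraph V)
    (hfan : ∀ v : V, IsEmpty (FanSubdivision G v k))
    (hlem : ∀ (W : Type) (H : SimpleGraph W) (U : Set W),
      IsEmpty (RootedPathMinor H U k) → RootedTreedepthLE H U Set.univ (k * (k - 1) / 2)) :
    ∀ v : V, RootedTreedepthLE (G.induce {w : V | w ≠ v})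
      {w : ↥{w : V | w ≠ v} | G.Adj v (w : V)} Set.univ (k * (k - 1) / 2) := by
  intro v
  refine hlem _ _ _ ⟨fun M => (hfan v).false ?_⟩
  refine ((M.map (Embedding.induce _)).nonempty_fanSubdivision ?_ ?_).some
  · rintro _ ⟨w, hw, rfl⟩
    exact hw
  · rintro _ ⟨w, -, hw⟩
    exact w.2 hw
end
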